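/- arXiv:2311.09405 — 9 statements merged into one kernel-verified Lean document; each statement's English description precedes it below -/
import Mathlib

section
/- Let τ̄ ∈ ℝ and let Γ⁺, Γ⁰, Γ⁻ : (−∞, τ̄] → [0, ∞) be nondecreasing bounded functions, and set Γ := Γ⁺ + Γ⁰ + Γ⁻. Assume Γ(τ) > 0 for all τ ≤ τ̄, and that there is a function ε : (−∞, τ̄] → [0, ∞) with ε(τ) → 0 as τ → −∞ such that for all τ ≤ τ̄: (i) Γ⁺(τ−1) ≤ e⁻¹·Γ⁺(τ) + ε(τ)·Γ(τ); (ii) |Γ⁰(τ−1) − Γ⁰(τ)| ≤ ε(τ)·Γ(τ); (iii) Γ⁻(τ−1) ≥ e·Γ⁻(τ) − ε(τ)·Γ(τ). Then there exists a function ε̃ : (−∞, τ̄] → [0, ∞) with ε̃(τ) → 0 as τ → −∞ such that either Γ⁺(τ) + Γ⁻(τ) ≤ ε̃(τ)·Γ⁰(τ) for all τ ≤ τ̄, or Γ⁰(τ) + Γ⁻(τ) ≤ ε̃(τ)·Γ⁺(τ) for all τ ≤ τ̄. -/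
open Filter

set_option maxHeartbeats 1000000

/-- Merle–Zaag-type dichotomy (Proposition 3.23). -/
theorem merle_zaag_dichotomy
    (τb : ℝ) (Γp Γ0 Γm ε : ℝ → ℝ)
    (hΓp_nonneg : ∀ τ ≤ τb, 0 ≤ Γp τ)
    (hΓ0_nonneg : ∀ τ ≤ τb, 0 ≤ Γ0 τ)
    (hΓm_nonneg : ∀ τ ≤ τb, 0 ≤ Γm τ)
    (hΓp_mono : MonotoneOn Γp (Set.Iic τb))
    (hΓ0_mono : MonotoneOn Γ0 (Set.Iic τb))
    (hΓm_mono : MonotoneOn Γm (Set.Iic τb))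
    (hΓp_bdd : ∃ M : ℝ, ∀ τ ≤ τb, Γp τ ≤ M)
    (hΓ0_bdd : ∃ M : ℝ, ∀ τ ≤ τb, Γ0 τ ≤ M)
    (hΓm_bdd : ∃ M : ℝ, ∀ τ ≤ τb, Γm τ ≤ M)
    (hΓpos : ∀ τ ≤ τb, 0 < Γp τ + Γ0 τ + Γm τ)
    (hε_nonneg : ∀ τ ≤ τb, 0 ≤ ε τ)
    (hε_lim : Tendsto ε atBot (nhds 0))
    (h1 : ∀ τ ≤ τb, Γp (τ - 1) ≤ (Real.exp 1)⁻¹ * Γp τ + ε τ * (Γp τ + Γ0 τ + Γm τ))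
    (h2 : ∀ τ ≤ τb, |Γ0 (τ - 1) - Γ0 τ| ≤ ε τ * (Γp τ + Γ0 τ + Γm τ))
    (h3 : ∀ τ ≤ τb, Real.exp 1 * Γm τ - ε τ * (Γp τ + Γ0 τ + Γm τ) ≤ Γm (τ - 1)) :
    ∃ ε' : ℝ → ℝ, (∀ τ ≤ τb, 0 ≤ ε' τ) ∧ Tendsto ε' atBot (nhds 0) ∧
      ((∀ τ ≤ τb, Γp τ + Γm τ ≤ ε' τ * Γ0 τ) ∨
        (∀ τ ≤ τb, Γ0 τ + Γm τ ≤ ε' τ * Γp τ)) := by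
  have mem : ∀ {x : ℝ}, x ≤ τb → x ∈ Set.Iic τb := fun {x} h => Set.mem_Iic.mpr h
  have hexp27 : (2.7:ℝ) < Real.exp 1 := by linarith [Real.exp_one_gt_d9]
  have hexpinv : (Real.exp 1)⁻¹ ≤ 0.38 := by
    have h := mul_inv_cancel₀ (ne_of_gt (Real.exp_pos 1))
    nlinarith [inv_nonneg.mpr (le_of_lt (Real.exp_pos 1))]
  -- extraction of eventual smallness of ε
  have hev : ∀ η : ℝ, 0 < η → ∃ S, S ≤ τb ∧ ∀ ρ, ρ ≤ S → ε ρ ≤ η := by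
    intro η hη
    obtain ⟨S, hS⟩ := eventually_atBot.mp (Metric.tendsto_nhds.mp hε_lim η hη)
    refine ⟨min S τb, min_le_right _ _, fun ρ hρ => ?_⟩
    have h := hS ρ (le_trans hρ (min_le_left _ _))
    rw [Real.dist_eq, sub_zero] at h
    exact le_of_lt (lt_of_le_of_lt (le_abs_self _) h)
  -- Γm is dominated by ε Γ
  have hZb : ∀ τ, τ ≤ τb → Γm τ ≤ 0.6 * (ε τ * (Γp τ + Γ0 τ + Γm τ)) := by
    intro τ hτ
    have h3' := h3 τ hτ
    have hm : Γm (τ - 1) ≤ Γm τ :=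
      hΓm_mono (mem (by linarith)) (mem hτ) (by linarith)
    nlinarith [hΓm_nonneg τ hτ,
      mul_nonneg (by linarith : (0:ℝ) ≤ Real.exp 1 - 2.7) (hΓm_nonneg τ hτ)]
  -- one-step lower bounds
  have hY1 : ∀ τ, τ ≤ τb →
      Γ0 τ - ε τ * (Γp τ + Γ0 τ + Γm τ) ≤ Γ0 (τ - 1) ∧
      Γ0 (τ - 1) ≤ Γ0 τ + ε τ * (Γp τ + Γ0 τ + Γm τ) := by
    intro τ hτ
    have h := abs_le.mp (h2 τ hτ)
    exact ⟨by linarith [h.1], by linarith [h.2]⟩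
  have hZ1 : ∀ τ, τ ≤ τb → Γm τ - ε τ * (Γp τ + Γ0 τ + Γm τ) ≤ Γm (τ - 1) := by
    intro τ hτ
    have h3' := h3 τ hτ
    nlinarith [mul_nonneg (by linarith : (0:ℝ) ≤ Real.exp 1 - 1) (hΓm_nonneg τ hτ)]
  -- lower bound for Γ on [τ-1, τ]
  have hGlow : ∀ τ, τ ≤ τb → ∀ σ, τ - 1 ≤ σ → σ ≤ τ →
      Γ0 τ + Γm τ - 2 * (ε τ * (Γp τ + Γ0 τ + Γm τ)) ≤ Γp σ + Γ0 σ + Γm σ := by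
    intro τ hτ σ h1σ h2σ
    have hσb : σ ≤ τb := le_trans h2σ hτ
    have hY := (hY1 τ hτ).1
    have hZ := hZ1 τ hτ
    have m1 : Γ0 (τ - 1) ≤ Γ0 σ := hΓ0_mono (mem (by linarith)) (mem hσb) h1σ
    have m2 : Γm (τ - 1) ≤ Γm σ := hΓm_mono (mem (by linarith)) (mem hσb) h1σ
    linarith [hΓp_nonneg σ hσb]
  obtain ⟨T0, hT0b, hT0⟩ := hev (1/100) (by norm_num)
  by_cases hcase : ∀ T, T ≤ T0 → ∃ τ, τ ≤ T ∧ Γp τ ≤ Γ0 τ + Γm τ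
  · -- CASE A: the neutral mode dominates
    have keyb : ∀ η', 0 < η' → η' ≤ 1/100 → ∀ S, S ≤ T0 →
        (∀ ρ, ρ ≤ S → ε ρ ≤ η') → ∀ τ, τ ≤ S → Γp τ ≤ Γ0 τ + Γm τ → ∀ n : ℕ,
        Γp (τ - n) ≤ ((0.8:ℝ)^n * (1/2) + 15*η'*(1 - (0.8:ℝ)^n)) *
          (Γp (τ - n) + Γ0 (τ - n) + Γm (τ - n)) := by
      intro η' hη'0 hη'1 S hST0 hεS τ hτS hstart n
      induction n with
      | zero =>
        simp only [Nat.cast_zero, sub_zero, pow_zero]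
        have hG := hΓpos τ (le_trans hτS (le_trans hST0 hT0b))
        nlinarith
      | succ n ih =>
        have hcast : τ - ((n + 1 : ℕ) : ℝ) = (τ - (n:ℕ)) - 1 := by push_cast; ring
        rw [hcast]
        obtain ⟨a, ha_def⟩ : ∃ a : ℝ, a = (0.8:ℝ)^n * (1/2) + 15*η'*(1 - (0.8:ℝ)^n) :=
          ⟨_, rfl⟩
        rw [← ha_def] at ih
        have hn0 : (0:ℝ) ≤ (n:ℕ) := Nat.cast_nonneg n
        have hσS : τ - (n:ℕ) ≤ S := by linarith
        have hσT0 : τ - (n:ℕ) ≤ T0 := le_trans hσS hST0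
        have hσb : τ - (n:ℕ) ≤ τb := le_trans hσT0 hT0b
        have hεσ : ε (τ - (n:ℕ)) ≤ η' := hεS _ hσS
        have hεσ0 : 0 ≤ ε (τ - (n:ℕ)) := hε_nonneg _ hσb
        have hGσ : 0 < Γp (τ - (n:ℕ)) + Γ0 (τ - (n:ℕ)) + Γm (τ - (n:ℕ)) := hΓpos _ hσb
        have hpn1 : (0.8:ℝ)^n ≤ 1 := pow_le_one₀ (by norm_num) (by norm_num)
        have hpn0 : (0:ℝ) ≤ (0.8:ℝ)^n := by positivity
        have hx : η' * (1 - (0.8:ℝ)^n) ≤ (1/100) * (1 - (0.8:ℝ)^n) :=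
          mul_le_mul_of_nonneg_right hη'1 (by linarith)
        have ha1 : a ≤ 1/2 := by rw [ha_def]; linarith
        have ha0 : 0 ≤ a := by
          rw [ha_def]
          have := mul_nonneg hη'0.le (by linarith : (0:ℝ) ≤ 1 - (0.8:ℝ)^n)
          linarith
        have hh1 := h1 (τ - (n:ℕ)) hσb
        have hεG : ε (τ - (n:ℕ)) * (Γp (τ - (n:ℕ)) + Γ0 (τ - (n:ℕ)) + Γm (τ - (n:ℕ)))
            ≤ η' * (Γp (τ - (n:ℕ)) + Γ0 (τ - (n:ℕ)) + Γm (τ - (n:ℕ))) :=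
          mul_le_mul_of_nonneg_right hεσ hGσ.le
        have heinv : (Real.exp 1)⁻¹ * Γp (τ - (n:ℕ)) ≤ 0.38 * Γp (τ - (n:ℕ)) :=
          mul_le_mul_of_nonneg_right hexpinv (hΓp_nonneg _ hσb)
        have h38 : 0.38 * Γp (τ - (n:ℕ)) ≤ 0.38 * (a *
            (Γp (τ - (n:ℕ)) + Γ0 (τ - (n:ℕ)) + Γm (τ - (n:ℕ)))) :=
          mul_le_mul_of_nonneg_left ih (by norm_num)
        have hstep1 : Γp ((τ - (n:ℕ)) - 1) ≤
            0.38 * a * (Γp (τ - (n:ℕ)) + Γ0 (τ - (n:ℕ)) + Γm (τ - (n:ℕ))) +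
            η' * (Γp (τ - (n:ℕ)) + Γ0 (τ - (n:ℕ)) + Γm (τ - (n:ℕ))) := by
          linarith
        have hGl := hGlow (τ - (n:ℕ)) hσb ((τ - (n:ℕ)) - 1) (le_refl _) (by linarith)
        have hkey : 0 ≤ (1 - a - 2*η' - 0.48) *
            (Γp (τ - (n:ℕ)) + Γ0 (τ - (n:ℕ)) + Γm (τ - (n:ℕ))) :=
          mul_nonneg (by linarith) hGσ.le
        have h48 : 0.48 * (Γp (τ - (n:ℕ)) + Γ0 (τ - (n:ℕ)) + Γm (τ - (n:ℕ))) ≤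
            Γp ((τ - (n:ℕ)) - 1) + Γ0 ((τ - (n:ℕ)) - 1) + Γm ((τ - (n:ℕ)) - 1) := by
          linarith
        have ha'0 : 0 ≤ 0.8*a + 3*η' := by linarith
        calc Γp ((τ - (n:ℕ)) - 1) ≤
            0.38 * a * (Γp (τ - (n:ℕ)) + Γ0 (τ - (n:ℕ)) + Γm (τ - (n:ℕ))) +
            η' * (Γp (τ - (n:ℕ)) + Γ0 (τ - (n:ℕ)) + Γm (τ - (n:ℕ))) := hstep1
          _ ≤ (0.8*a + 3*η') *
              (0.48 * (Γp (τ - (n:ℕ)) + Γ0 (τ - (n:ℕ)) + Γm (τ - (n:ℕ)))) := by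
            have u1 : 0 ≤ a * (Γp (τ - (n:ℕ)) + Γ0 (τ - (n:ℕ)) + Γm (τ - (n:ℕ))) :=
              mul_nonneg ha0 hGσ.le
            have u2 : 0 ≤ η' * (Γp (τ - (n:ℕ)) + Γ0 (τ - (n:ℕ)) + Γm (τ - (n:ℕ))) :=
              mul_nonneg hη'0.le hGσ.le
            nlinarith
          _ ≤ (0.8*a + 3*η') *
              (Γp ((τ - (n:ℕ)) - 1) + Γ0 ((τ - (n:ℕ)) - 1) + Γm ((τ - (n:ℕ)) - 1)) :=
            mul_le_mul_of_nonneg_left h48 ha'0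
          _ = ((0.8:ℝ)^(n+1) * (1/2) + 15*η'*(1 - (0.8:ℝ)^(n+1))) *
              (Γp ((τ - (n:ℕ)) - 1) + Γ0 ((τ - (n:ℕ)) - 1) + Γm ((τ - (n:ℕ)) - 1)) := by
            rw [ha_def]; ring
    -- smallness of Γp relative to Γ
    have hXsmall : ∀ η : ℝ, 0 < η → ∃ S', S' ≤ T0 ∧ ∀ σ, σ ≤ S' →
        Γp σ ≤ η * (Γp σ + Γ0 σ + Γm σ) := by
      intro η hη
      obtain ⟨η', hη'def⟩ : ∃ x : ℝ, x = min (1/100) (η/100) := ⟨_, rfl⟩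
      have hη'0 : 0 < η' := hη'def ▸ lt_min (by norm_num) (by positivity)
      have hη'1 : η' ≤ 1/100 := hη'def ▸ min_le_left _ _
      have hη'2 : η' ≤ η/100 := hη'def ▸ min_le_right _ _
      obtain ⟨S0, hS0b, hS0⟩ := hev η' hη'0
      have hST0 : min S0 T0 ≤ T0 := min_le_right _ _
      have hεS : ∀ ρ, ρ ≤ min S0 T0 → ε ρ ≤ η' :=
        fun ρ hρ => hS0 ρ (le_trans hρ (min_le_left _ _))
      obtain ⟨τ1, hτ1S, hτ1⟩ := hcase (min S0 T0) hST0
      obtain ⟨n0, hn0⟩ := exists_pow_lt_of_lt_one hη'0 (by norm_num : (0.8:ℝ) < 1)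
      refine ⟨τ1 - ((n0:ℕ) + 1 : ℝ), ?_, fun σ hσ => ?_⟩
      · have h0 : (0:ℝ) ≤ (n0:ℕ) := Nat.cast_nonneg n0
        have h1' := le_trans hτ1S hST0
        linarith
      · have hn00 : (0:ℝ) ≤ (n0:ℕ) := Nat.cast_nonneg n0
        have hτσ : (n0:ℕ) + 1 ≤ τ1 - σ := by linarith
        have hm1 : ((⌊τ1 - σ⌋₊ : ℕ) : ℝ) ≤ τ1 - σ := Nat.floor_le (by linarith)
        have hm2 : τ1 - σ < ((⌊τ1 - σ⌋₊ : ℕ) : ℝ) + 1 := Nat.lt_floor_add_one _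
        have hmn0 : n0 + 1 ≤ ⌊τ1 - σ⌋₊ := Nat.le_floor (by push_cast; linarith)
        obtain ⟨m, hm_def⟩ : ∃ m : ℕ, m = ⌊τ1 - σ⌋₊ := ⟨_, rfl⟩
        rw [← hm_def] at hm1 hm2 hmn0
        have hστ' : σ ≤ τ1 - (m:ℕ) := by linarith
        have hτ'1σ : τ1 - (m:ℕ) - 1 ≤ σ := by linarith
        have hkm := keyb η' hη'0 hη'1 (min S0 T0) hST0 hεS τ1 hτ1S hτ1 m
        have hτ'S : τ1 - (m:ℕ) ≤ min S0 T0 := by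
          have h0 : (0:ℝ) ≤ (m:ℕ) := Nat.cast_nonneg m
          linarith
        have hτ'b : τ1 - (m:ℕ) ≤ τb := le_trans (le_trans hτ'S hST0) hT0b
        have hσb : σ ≤ τb := le_trans hστ' hτ'b
        have hpm : (0.8:ℝ)^m ≤ (0.8:ℝ)^n0 :=
          pow_le_pow_of_le_one (by norm_num) (by norm_num) (by omega)
        have hpm0 : (0:ℝ) ≤ (0.8:ℝ)^m := by positivity
        have hpm1 : (0.8:ℝ)^m ≤ 1 := pow_le_one₀ (by norm_num) (by norm_num)
        obtain ⟨a, ha_def⟩ : ∃ a : ℝ, a = (0.8:ℝ)^m * (1/2) + 15*η'*(1 - (0.8:ℝ)^m) :=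
          ⟨_, rfl⟩
        rw [← ha_def] at hkm
        have hx : η' * (1 - (0.8:ℝ)^m) ≤ (1/100) * (1 - (0.8:ℝ)^m) :=
          mul_le_mul_of_nonneg_right hη'1 (by linarith)
        have hx0 : 0 ≤ η' * (1 - (0.8:ℝ)^m) := mul_nonneg hη'0.le (by linarith)
        have ha0 : 0 ≤ a := by rw [ha_def]; linarith
        have ha1 : a ≤ 1/2 := by rw [ha_def]; linarith
        have ham : a ≤ 16*η' := by
          rw [ha_def]
          have hy : η' * (0.8:ℝ)^m ≥ 0 := mul_nonneg hη'0.le hpm0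
          nlinarith
        have hmono : Γp σ ≤ Γp (τ1 - (m:ℕ)) := hΓp_mono (mem hσb) (mem hτ'b) hστ'
        have hGl := hGlow (τ1 - (m:ℕ)) hτ'b σ hτ'1σ hστ'
        have hετ' : ε (τ1 - (m:ℕ)) ≤ η' := hεS _ hτ'S
        have hGτ' : 0 < Γp (τ1 - (m:ℕ)) + Γ0 (τ1 - (m:ℕ)) + Γm (τ1 - (m:ℕ)) :=
          hΓpos _ hτ'b
        have hGσ0 : 0 < Γp σ + Γ0 σ + Γm σ := hΓpos σ hσb
        have hεG : ε (τ1 - (m:ℕ)) *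
            (Γp (τ1 - (m:ℕ)) + Γ0 (τ1 - (m:ℕ)) + Γm (τ1 - (m:ℕ))) ≤
            η' * (Γp (τ1 - (m:ℕ)) + Γ0 (τ1 - (m:ℕ)) + Γm (τ1 - (m:ℕ))) :=
          mul_le_mul_of_nonneg_right hετ' hGτ'.le
        have hkey : 0 ≤ (1 - a - 2*η' - 0.48) *
            (Γp (τ1 - (m:ℕ)) + Γ0 (τ1 - (m:ℕ)) + Γm (τ1 - (m:ℕ))) :=
          mul_nonneg (by linarith) hGτ'.le
        have h48 : 0.48 * (Γp (τ1 - (m:ℕ)) + Γ0 (τ1 - (m:ℕ)) + Γm (τ1 - (m:ℕ))) ≤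
            Γp σ + Γ0 σ + Γm σ := by linarith
        have f1 : Γp σ ≤ a * (Γp (τ1 - (m:ℕ)) + Γ0 (τ1 - (m:ℕ)) + Γm (τ1 - (m:ℕ))) :=
          le_trans hmono hkm
        have f2 : a * (0.48 * (Γp (τ1 - (m:ℕ)) + Γ0 (τ1 - (m:ℕ)) + Γm (τ1 - (m:ℕ)))) ≤
            a * (Γp σ + Γ0 σ + Γm σ) := mul_le_mul_of_nonneg_left h48 ha0
        have f3 : a * (Γp σ + Γ0 σ + Γm σ) ≤ 16*η' * (Γp σ + Γ0 σ + Γm σ) :=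
          mul_le_mul_of_nonneg_right ham hGσ0.le
        have f4 : η' * (Γp σ + Γ0 σ + Γm σ) ≤ (η/100) * (Γp σ + Γ0 σ + Γm σ) :=
          mul_le_mul_of_nonneg_right hη'2 hGσ0.le
        have f5 : 0 ≤ η * (Γp σ + Γ0 σ + Γm σ) := mul_nonneg hη.le hGσ0.le
        linarith
    -- conclude case A
    obtain ⟨S2, hS2T0, hS2⟩ := hXsmall (1/8) (by norm_num)
    have hS2b : S2 ≤ τb := le_trans hS2T0 hT0b
    have hY2 : ∀ σ, σ ≤ S2 → (Γp σ + Γ0 σ + Γm σ)/2 ≤ Γ0 σ := by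
      intro σ hσ
      have hσb : σ ≤ τb := le_trans hσ hS2b
      have hZσ := hZb σ hσb
      have hεσ := hT0 σ (le_trans hσ hS2T0)
      have hG := hΓpos σ hσb
      have hεG : ε σ * (Γp σ + Γ0 σ + Γm σ) ≤ (1/100) * (Γp σ + Γ0 σ + Γm σ) :=
        mul_le_mul_of_nonneg_right hεσ hG.le
      have hp := hS2 σ hσ
      linarith
    have hYpos : ∀ τ, τ ≤ τb → 0 < Γ0 τ := by
      intro τ hτ
      rcases le_or_gt τ S2 with h | h
      · exact lt_of_lt_of_le (by linarith [hΓpos τ hτ]) (hY2 τ h)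
      · exact lt_of_lt_of_le
          (lt_of_lt_of_le (by linarith [hΓpos S2 hS2b]) (hY2 S2 le_rfl))
          (hΓ0_mono (mem hS2b) (mem hτ) h.le)
    refine ⟨fun τ => (Γp τ + Γm τ)/(Γ0 τ),
      fun τ hτ => div_nonneg (by linarith [hΓp_nonneg τ hτ, hΓm_nonneg τ hτ]) (hYpos τ hτ).le,
      ?_, Or.inl fun τ hτ => le_of_eq (div_mul_cancel₀ _ (ne_of_gt (hYpos τ hτ))).symm⟩
    rw [Metric.tendsto_nhds]
    intro η hη
    rw [eventually_atBot]
    obtain ⟨δ, hδdef⟩ : ∃ x : ℝ, x = min (1/100) (η/8) := ⟨_, rfl⟩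
    have hδ0 : 0 < δ := hδdef ▸ lt_min (by norm_num) (by positivity)
    have hδη : δ ≤ η/8 := hδdef ▸ min_le_right _ _
    obtain ⟨S3, hS3T0, hS3⟩ := hXsmall δ hδ0
    obtain ⟨S4, hS4b, hS4⟩ := hev δ hδ0
    refine ⟨min (min S3 S4) S2, fun σ hσ => ?_⟩
    have hσ3 : σ ≤ S3 := le_trans hσ (le_trans (min_le_left _ _) (min_le_left _ _))
    have hσ4 : σ ≤ S4 := le_trans hσ (le_trans (min_le_left _ _) (min_le_right _ _))
    have hσ2 : σ ≤ S2 := le_trans hσ (min_le_right _ _)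
    have hσb : σ ≤ τb := le_trans hσ2 hS2b
    have hY0 := hYpos σ hσb
    have hnn : 0 ≤ (Γp σ + Γm σ)/(Γ0 σ) :=
      div_nonneg (by linarith [hΓp_nonneg σ hσb, hΓm_nonneg σ hσb]) hY0.le
    rw [Real.dist_eq, sub_zero, abs_of_nonneg hnn, div_lt_iff₀ hY0]
    have hp := hS3 σ hσ3
    have hZσ := hZb σ hσb
    have hεσ := hS4 σ hσ4
    have hY := hY2 σ hσ2
    have hG := hΓpos σ hσb
    have hεG : ε σ * (Γp σ + Γ0 σ + Γm σ) ≤ δ * (Γp σ + Γ0 σ + Γm σ) :=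
      mul_le_mul_of_nonneg_right hεσ hG.le
    have hδG : δ * (Γp σ + Γ0 σ + Γm σ) ≤ δ * (2 * Γ0 σ) :=
      mul_le_mul_of_nonneg_left (by linarith) hδ0.le
    have hδY : δ * Γ0 σ ≤ (η/8) * Γ0 σ := mul_le_mul_of_nonneg_right hδη hY0.le
    have hηY : 0 < η * Γ0 σ := mul_pos hη hY0
    linarith
  · -- CASE B: the positive mode dominates
    push_neg at hcase
    obtain ⟨T1, hT1T0, hT1⟩ := hcase
    have hT1b : T1 ≤ τb := le_trans hT1T0 hT0b
    have hXposlow : ∀ τ, τ ≤ T1 → 0 < Γp τ := by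
      intro τ hτ
      have h := hΓpos τ (le_trans hτ hT1b)
      have h' := hT1 τ hτ
      linarith
    have hXpos : ∀ τ, τ ≤ τb → 0 < Γp τ := by
      intro τ hτ
      rcases le_or_gt τ T1 with h | h
      · exact hXposlow τ h
      · exact lt_of_lt_of_le (hXposlow T1 le_rfl) (hΓp_mono (mem hT1b) (mem hτ) h.le)
    have hdecay : ∀ τ, τ ≤ T1 → ∀ n : ℕ, Γp (τ - n) ≤ (0.4:ℝ)^n * Γp τ := by
      intro τ hτ n
      induction n with
      | zero => norm_num
      | succ n ih =>
        have hn0 : (0:ℝ) ≤ (n:ℕ) := Nat.cast_nonneg n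
        have hσT1 : τ - (n:ℕ) ≤ T1 := by linarith
        have hσb : τ - (n:ℕ) ≤ τb := le_trans hσT1 hT1b
        have hcast : τ - ((n + 1 : ℕ) : ℝ) = (τ - (n:ℕ)) - 1 := by push_cast; ring
        rw [hcast]
        have hh := h1 (τ - (n:ℕ)) hσb
        have hεσ : ε (τ - (n:ℕ)) ≤ 1/100 := hT0 _ (le_trans hσT1 hT1T0)
        have hd := hT1 _ hσT1
        have hXσ := hXposlow _ hσT1
        have heinv := mul_le_mul_of_nonneg_right hexpinv hXσ.le
        have hG0 : (0:ℝ) ≤ Γp (τ - (n:ℕ)) + Γ0 (τ - (n:ℕ)) + Γm (τ - (n:ℕ)) :=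
          (hΓpos _ hσb).le
        have hεG : ε (τ - (n:ℕ)) * (Γp (τ - (n:ℕ)) + Γ0 (τ - (n:ℕ)) + Γm (τ - (n:ℕ))) ≤
            (1/100) * (2 * Γp (τ - (n:ℕ))) := by
          have t1 := mul_le_mul_of_nonneg_right hεσ hG0
          have t2 : (1/100 : ℝ) * (Γp (τ - (n:ℕ)) + Γ0 (τ - (n:ℕ)) + Γm (τ - (n:ℕ))) ≤
              (1/100) * (2 * Γp (τ - (n:ℕ))) :=
            mul_le_mul_of_nonneg_left (by linarith) (by norm_num)
          linarith
        have hp4 : (0:ℝ) ≤ (0.4:ℝ)^n := by positivity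
        calc Γp ((τ - (n:ℕ)) - 1) ≤ 0.4 * Γp (τ - (n:ℕ)) := by linarith
          _ ≤ 0.4 * ((0.4:ℝ)^n * Γp τ) := mul_le_mul_of_nonneg_left ih (by norm_num)
          _ = (0.4:ℝ)^(n+1) * Γp τ := by ring
    have hYb : ∀ η', 0 < η' → ∀ S, S ≤ T1 → (∀ ρ, ρ ≤ S → ε ρ ≤ η') →
        ∀ σ, σ ≤ S → ∀ m : ℕ,
        Γ0 σ ≤ Γ0 (σ - m) + 4*η'*(1 - (0.4:ℝ)^m) * Γp σ := by
      intro η' hη'0 S hST1 hεS σ hσS m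
      have hσT1 : σ ≤ T1 := le_trans hσS hST1
      have hXσ := hXposlow σ hσT1
      induction m with
      | zero => norm_num
      | succ m ih =>
        have hm0 : (0:ℝ) ≤ (m:ℕ) := Nat.cast_nonneg m
        have hρS : σ - (m:ℕ) ≤ S := by linarith
        have hρT1 : σ - (m:ℕ) ≤ T1 := le_trans hρS hST1
        have hρb : σ - (m:ℕ) ≤ τb := le_trans hρT1 hT1b
        have hcast : σ - ((m + 1 : ℕ) : ℝ) = (σ - (m:ℕ)) - 1 := by push_cast; ring
        rw [hcast]
        have hY := (hY1 (σ - (m:ℕ)) hρb).1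
        have hd := hT1 _ hρT1
        have hεR : ε (σ - (m:ℕ)) ≤ η' := hεS _ hρS
        have hGρ0 : (0:ℝ) ≤ Γp (σ - (m:ℕ)) + Γ0 (σ - (m:ℕ)) + Γm (σ - (m:ℕ)) :=
          (hΓpos _ hρb).le
        have hεG : ε (σ - (m:ℕ)) * (Γp (σ - (m:ℕ)) + Γ0 (σ - (m:ℕ)) + Γm (σ - (m:ℕ))) ≤
            η' * (2 * Γp (σ - (m:ℕ))) := by
          have t1 := mul_le_mul_of_nonneg_right hεR hGρ0
          have t2 : η' * (Γp (σ - (m:ℕ)) + Γ0 (σ - (m:ℕ)) + Γm (σ - (m:ℕ))) ≤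
              η' * (2 * Γp (σ - (m:ℕ))) :=
            mul_le_mul_of_nonneg_left (by linarith) hη'0.le
          linarith
        have hdec := hdecay σ hσT1 m
        have hp4 : (0:ℝ) ≤ (0.4:ℝ)^m := by positivity
        have hscale : η' * Γp (σ - (m:ℕ)) ≤ η' * ((0.4:ℝ)^m * Γp σ) :=
          mul_le_mul_of_nonneg_left hdec hη'0.le
        have hmono0 : 0 ≤ η' * ((0.4:ℝ)^m * Γp σ) :=
          mul_nonneg hη'0.le (mul_nonneg hp4 hXσ.le)
        rw [pow_succ]
        linarith [ih]
    have hYZsmall : ∀ η : ℝ, 0 < η → ∃ S', S' ≤ T1 ∧ ∀ σ, σ ≤ S' →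
        Γ0 σ + Γm σ ≤ η * Γp σ := by
      intro η hη
      obtain ⟨η', hη'def⟩ : ∃ x : ℝ, x = min (1/100) (η/8) := ⟨_, rfl⟩
      have hη'0 : 0 < η' := hη'def ▸ lt_min (by norm_num) (by positivity)
      have hη'1 : η' ≤ 1/100 := hη'def ▸ min_le_left _ _
      have hη'2 : η' ≤ η/8 := hη'def ▸ min_le_right _ _
      obtain ⟨S0, hS0b, hS0⟩ := hev η' hη'0
      refine ⟨min S0 T1, min_le_right _ _, fun σ hσ => ?_⟩
      have hσS0 : σ ≤ S0 := le_trans hσ (min_le_left _ _)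
      have hσT1 : σ ≤ T1 := le_trans hσ (min_le_right _ _)
      have hσb : σ ≤ τb := le_trans hσT1 hT1b
      obtain ⟨m, hm⟩ := exists_pow_lt_of_lt_one hη'0 (by norm_num : (0.4:ℝ) < 1)
      have hYσ := hYb η' hη'0 (min S0 T1) (min_le_right _ _)
        (fun ρ hρ => hS0 ρ (le_trans hρ (min_le_left _ _))) σ hσ m
      have hm0 : (0:ℝ) ≤ (m:ℕ) := Nat.cast_nonneg m
      have hρT1 : σ - (m:ℕ) ≤ T1 := by linarith
      have hdm := hT1 _ hρT1
      have hZρ := hΓm_nonneg _ (le_trans hρT1 hT1b)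
      have hdec := hdecay σ hσT1 m
      have hXσ := hXposlow σ hσT1
      have h04 : (0.4:ℝ)^m * Γp σ ≤ η' * Γp σ := mul_le_mul_of_nonneg_right hm.le hXσ.le
      have hη'Γ : η' * Γp σ ≤ (η/8) * Γp σ := mul_le_mul_of_nonneg_right hη'2 hXσ.le
      have hZσ := hZb σ hσb
      have hεσ := hS0 σ hσS0
      have hG0 : (0:ℝ) ≤ Γp σ + Γ0 σ + Γm σ := (hΓpos σ hσb).le
      have hεG : ε σ * (Γp σ + Γ0 σ + Γm σ) ≤ η' * (2 * Γp σ) := by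
        have t1 := mul_le_mul_of_nonneg_right hεσ hG0
        have hd := hT1 σ hσT1
        have t2 : η' * (Γp σ + Γ0 σ + Γm σ) ≤ η' * (2 * Γp σ) :=
          mul_le_mul_of_nonneg_left (by linarith) hη'0.le
        linarith
      have hp4 : (0:ℝ) ≤ (0.4:ℝ)^m := by positivity
      have hpos : 0 ≤ η' * ((0.4:ℝ)^m * Γp σ) :=
        mul_nonneg hη'0.le (mul_nonneg hp4 hXσ.le)
      have hηX : 0 < η * Γp σ := mul_pos hη hXσ
      linarith
    refine ⟨fun τ => (Γ0 τ + Γm τ)/(Γp τ),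
      fun τ hτ => div_nonneg (by linarith [hΓ0_nonneg τ hτ, hΓm_nonneg τ hτ]) (hXpos τ hτ).le,
      ?_, Or.inr fun τ hτ => le_of_eq (div_mul_cancel₀ _ (ne_of_gt (hXpos τ hτ))).symm⟩
    rw [Metric.tendsto_nhds]
    intro η hη
    rw [eventually_atBot]
    obtain ⟨S', hS'T1, hS'⟩ := hYZsmall (η/2) (by positivity)
    refine ⟨S', fun σ hσ => ?_⟩
    have hσb : σ ≤ τb := le_trans (le_trans hσ hS'T1) hT1b
    have hX0 := hXpos σ hσb
    have hnn : 0 ≤ (Γ0 σ + Γm σ)/(Γp σ) :=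
      div_nonneg (by linarith [hΓ0_nonneg σ hσb, hΓm_nonneg σ hσb]) hX0.le
    rw [Real.dist_eq, sub_zero, abs_of_nonneg hnn, div_lt_iff₀ hX0]
    have h := hS' σ hσ
    have hηX : 0 < η * Γp σ := mul_pos hη hX0
    linarith
end

section
/- Let F : ℝ × (0, ∞) → (0, ∞) and Ē_rad, Ē_orb : ℝ × (0, ∞) → ℝ be smooth, and suppose that for all (z, s) ∈ ℝ × (0, ∞): −∂_sF(z,s) = ∂_z²F(z,s) − F(z,s)⁻¹·(1 + (∂_zF(z,s))²) + 2·∂_zF(z,s)·[(∂_zF/F)(0,s) − ∫₀^z ((∂_zF/F)(ζ,s))² dζ] − F(z,s)⁻¹·Ē_orb(z,s) + ∂_zF(z,s)·∫₀^z Ē_rad(ζ,s) dζ. Define, for (ξ, τ) ∈ ℝ²: G(ξ,τ) := e^{τ/2}·F(e^{−τ/2}ξ, e^{−τ}) − √2, E_rad(ξ,τ) := e^{−τ}·Ē_rad(e^{−τ/2}ξ, e^{−τ}), and E_orb(ξ,τ) := Ē_orb(e^{−τ/2}ξ, e^{−τ}). Then for all (ξ, τ): ∂_τG = ∂_ξ²G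 − (ξ/2)·∂_ξG + ½·(√2 + G) − (√2 + G)⁻¹·(1 + (∂_ξG)²) + 2·∂_ξG·[(∂_ξG/(√2+G))(0,τ) − ∫₀^ξ ((∂_ξG)²/(√2+G)²)(x,τ) dx] − (√2 + G)⁻¹·E_orb + ∂_ξG·∫₀^ξ E_rad(x,τ) dx. -/
/-- Proposition 3.9: the parabolic rescaling G(ξ,τ) = e^{τ/2}F(e^{−τ/2}ξ, e^{−τ}) − √2
converts the evolution equation of the profile F, with error terms Ē_rad, Ē_orb,
into the stated equation for G. -/
theorem rescaled_profile_equation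
    (F Erad Eorb : ℝ → ℝ → ℝ)
    (hFpos : ∀ z : ℝ, ∀ s > (0:ℝ), 0 < F z s)
    (hFsmooth : ContDiffOn ℝ (⊤ : ℕ∞) (fun p : ℝ × ℝ => F p.1 p.2) (Set.univ ×ˢ Set.Ioi 0))
    (hEradsmooth : ContDiffOn ℝ (⊤ : ℕ∞) (fun p : ℝ × ℝ => Erad p.1 p.2) (Set.univ ×ˢ Set.Ioi 0))
    (hEorbsmooth : ContDiffOn ℝ (⊤ : ℕ∞) (fun p : ℝ × ℝ => Eorb p.1 p.2) (Set.univ ×ˢ Set.Ioi 0))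
    (heq : ∀ z : ℝ, ∀ s > (0:ℝ),
      - deriv (fun σ => F z σ) s
        = deriv (deriv (fun ζ => F ζ s)) z
          - (F z s)⁻¹ * (1 + (deriv (fun ζ => F ζ s) z) ^ 2)
          + 2 * deriv (fun ζ => F ζ s) z *
              (deriv (fun ζ => F ζ s) 0 / F 0 s
                - ∫ ζ in (0:ℝ)..z, (deriv (fun ζ' => F ζ' s) ζ / F ζ s) ^ 2)
          - (F z s)⁻¹ * Eorb z s
          + deriv (fun ζ => F ζ s) z * ∫ ζ in (0:ℝ)..z, Erad ζ s)
    (G ER EO : ℝ → ℝ → ℝ)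
    (hG : ∀ ξ τ : ℝ,
      G ξ τ = Real.exp (τ / 2) * F (Real.exp (-τ / 2) * ξ) (Real.exp (-τ)) - Real.sqrt 2)
    (hER : ∀ ξ τ : ℝ,
      ER ξ τ = Real.exp (-τ) * Erad (Real.exp (-τ / 2) * ξ) (Real.exp (-τ)))
    (hEO : ∀ ξ τ : ℝ,
      EO ξ τ = Eorb (Real.exp (-τ / 2) * ξ) (Real.exp (-τ))) :
    ∀ ξ τ : ℝ,
      deriv (fun σ => G ξ σ) τ
        = deriv (deriv (fun x => G x τ)) ξ
          - (ξ / 2) * deriv (fun x => G x τ) ξ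
          + (1 / 2) * (Real.sqrt 2 + G ξ τ)
          - (Real.sqrt 2 + G ξ τ)⁻¹ * (1 + (deriv (fun x => G x τ) ξ) ^ 2)
          + 2 * deriv (fun x => G x τ) ξ *
              (deriv (fun x => G x τ) 0 / (Real.sqrt 2 + G 0 τ)
                - ∫ x in (0:ℝ)..ξ,
                    (deriv (fun x' => G x' τ) x) ^ 2 / (Real.sqrt 2 + G x τ) ^ 2)
          - (Real.sqrt 2 + G ξ τ)⁻¹ * EO ξ τ
          + deriv (fun x => G x τ) ξ * ∫ x in (0:ℝ)..ξ, ER x τ := by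
  intro ξ τ
  -- abbreviations
  have hs : (0:ℝ) < Real.exp (-τ) := Real.exp_pos _
  have hc : (0:ℝ) < Real.exp (-τ / 2) := Real.exp_pos _
  have hca : Real.exp (-τ / 2) * Real.exp (τ / 2) = 1 := by
    rw [← Real.exp_add, show -τ / 2 + τ / 2 = 0 by ring, Real.exp_zero]
  have hcs : Real.exp (-τ / 2) * Real.exp (-τ / 2) = Real.exp (-τ) := by
    rw [← Real.exp_add, show -τ / 2 + -τ / 2 = -τ by ring]
  set c := Real.exp (-τ / 2) with hc_def
  set a := Real.exp (τ / 2) with ha_def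
  set s := Real.exp (-τ) with hs_def
  have ha : a = c⁻¹ := by
    field_simp
    linarith [hca]
  -- smooth section in the space variable
  have hsect : ContDiff ℝ ((⊤ : ℕ∞) : WithTop ℕ∞) (fun z => F z s) := by
    rw [contDiff_iff_contDiffAt]
    intro z
    have hmem : Set.univ ×ˢ Set.Ioi 0 ∈ nhds ((z, s) : ℝ × ℝ) :=
      (isOpen_univ.prod isOpen_Ioi).mem_nhds ⟨trivial, hs⟩
    exact ((hFsmooth.contDiffAt hmem).of_le (le_refl ((⊤ : ℕ∞) : WithTop ℕ∞))).comp z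
      (contDiffAt_id.prodMk contDiffAt_const)
  have hfd : ∀ y : ℝ, HasDerivAt (fun z => F z s) (deriv (fun z => F z s) y) y :=
    fun y => (hsect.differentiable (by simp) y).hasDerivAt
  have hsect' : ContDiff ℝ ((⊤ : ℕ∞) : WithTop ℕ∞) (deriv (fun z => F z s)) := by
    have := hsect.iterate_deriv 1
    simpa using this
  have hfd' : ∀ y : ℝ, HasDerivAt (deriv (fun z => F z s))
      (deriv (deriv (fun z => F z s)) y) y :=
    fun y => (hsect'.differentiable (by simp) y).hasDerivAt
  -- the rescaled function of x, at fixed τ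
  have hgfun : (fun x => G x τ) = fun x => a * F (c * x) s - Real.sqrt 2 :=
    funext fun x => hG x τ
  -- derivative of G in x
  have hgx : ∀ x : ℝ, HasDerivAt (fun x => G x τ) (deriv (fun z => F z s) (c * x)) x := by
    intro x
    rw [hgfun]
    have hin : HasDerivAt (fun y : ℝ => c * y) c x := by
      simpa using (hasDerivAt_id x).const_mul c
    have h1 : HasDerivAt (fun y : ℝ => F (c * y) s)
        (deriv (fun z => F z s) (c * x) * c) x := (hfd (c * x)).comp x hin
    have h2 := (h1.const_mul a).sub_const (Real.sqrt 2)
    have : a * (deriv (fun z => F z s) (c * x) * c) = deriv (fun z => F z s) (c * x) := by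
      linear_combination deriv (fun z => F z s) (c * x) * hca
    rwa [this] at h2
  have hgderiv : deriv (fun x => G x τ) = fun x => deriv (fun z => F z s) (c * x) :=
    funext fun x => (hgx x).deriv
  -- second derivative of G in x
  have hgxx : deriv (deriv (fun x => G x τ)) ξ
      = c * deriv (deriv (fun z => F z s)) (c * ξ) := by
    rw [hgderiv]
    have hin : HasDerivAt (fun y : ℝ => c * y) c ξ := by
      simpa using (hasDerivAt_id ξ).const_mul c
    have h1 : HasDerivAt (fun y : ℝ => deriv (fun z => F z s) (c * y))
        (deriv (deriv (fun z => F z s)) (c * ξ) * c) ξ := (hfd' (c * ξ)).comp ξ hin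
    rw [h1.deriv]; ring
  -- full derivative of F at the point (c*ξ, s)
  have hmem : Set.univ ×ˢ Set.Ioi 0 ∈ nhds ((c * ξ, s) : ℝ × ℝ) :=
    (isOpen_univ.prod isOpen_Ioi).mem_nhds ⟨trivial, hs⟩
  have hF2 : DifferentiableAt ℝ (fun p : ℝ × ℝ => F p.1 p.2) (c * ξ, s) :=
    ((hFsmooth.contDiffAt hmem).of_le (show (1 : WithTop ℕ∞) ≤ ((⊤ : ℕ∞) : WithTop ℕ∞) from WithTop.coe_le_coe.mpr le_top)).differentiableAt one_ne_zero
  set L := fderiv ℝ (fun p : ℝ × ℝ => F p.1 p.2) (c * ξ, s) with hL_def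
  have hL : HasFDerivAt (fun p : ℝ × ℝ => F p.1 p.2) L (c * ξ, s) := hF2.hasFDerivAt
  -- partial derivatives from L
  have hpz : HasDerivAt (fun z => F z s) (L (1, 0)) (c * ξ) := by
    have hγ : HasDerivAt (fun z : ℝ => ((z, s) : ℝ × ℝ)) ((1 : ℝ), (0 : ℝ)) (c * ξ) :=
      (hasDerivAt_id _).prodMk (hasDerivAt_const _ _)
    have h := hL.comp_hasDerivAt (c * ξ) hγ
    exact h
  have hps : HasDerivAt (fun σ => F (c * ξ) σ) (L (0, 1)) s := by
    have hγ : HasDerivAt (fun σ : ℝ => ((c * ξ, σ) : ℝ × ℝ)) ((0 : ℝ), (1 : ℝ)) s :=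
      (hasDerivAt_const _ _).prodMk (hasDerivAt_id _)
    have h := hL.comp_hasDerivAt s hγ
    exact h
  have hLz : L (1, 0) = deriv (fun z => F z s) (c * ξ) := hpz.deriv.symm
  have hLs : L (0, 1) = deriv (fun σ => F (c * ξ) σ) s := hps.deriv.symm
  have hlin : ∀ x y : ℝ, L (x, y) = x * L (1, 0) + y * L (0, 1) := by
    intro x y
    have hxy : ((x, y) : ℝ × ℝ) = x • ((1:ℝ), (0:ℝ)) + y • ((0:ℝ), (1:ℝ)) := by
      simp [Prod.ext_iff]
    rw [hxy, map_add, map_smul, map_smul, smul_eq_mul, smul_eq_mul]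
  -- time derivative of G
  have hτfun : (fun σ => G ξ σ)
      = fun σ => Real.exp (σ / 2) * F (Real.exp (-σ / 2) * ξ) (Real.exp (-σ)) - Real.sqrt 2 :=
    funext fun σ => hG ξ σ
  have hEτ : deriv (fun σ => G ξ σ) τ
      = (1/2) * (a * F (c * ξ) s) - (ξ / 2) * deriv (fun z => F z s) (c * ξ)
        - c * deriv (fun σ => F (c * ξ) σ) s := by
    rw [hτfun]
    have hp1 : HasDerivAt (fun σ : ℝ => Real.exp (-σ / 2) * ξ) (c * (-(1:ℝ)/2) * ξ) τ := by
      have hin : HasDerivAt (fun σ : ℝ => -σ / 2) (-(1:ℝ)/2) τ := by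
        simpa using ((hasDerivAt_id τ).neg.div_const 2)
      exact ((Real.hasDerivAt_exp (-τ / 2)).comp τ hin).mul_const ξ
    have hp2 : HasDerivAt (fun σ : ℝ => Real.exp (-σ)) (s * (-1 : ℝ)) τ := by
      have hin : HasDerivAt (fun σ : ℝ => -σ) (-1 : ℝ) τ := by
        exact hasDerivAt_neg τ
      exact (Real.hasDerivAt_exp (-τ)).comp τ hin
    have hp : HasDerivAt (fun σ : ℝ => ((Real.exp (-σ / 2) * ξ, Real.exp (-σ)) : ℝ × ℝ))
        ((c * (-(1:ℝ)/2) * ξ, s * (-1 : ℝ)) : ℝ × ℝ) τ := hp1.prodMk hp2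
    have hcomp : HasDerivAt (fun σ : ℝ => F (Real.exp (-σ / 2) * ξ) (Real.exp (-σ)))
        (L (c * (-(1:ℝ)/2) * ξ, s * (-1 : ℝ))) τ := by
      have h := hL.comp_hasDerivAt τ hp
      exact h
    have hout : HasDerivAt (fun σ : ℝ => Real.exp (σ / 2)) (a * (1/2)) τ := by
      have hin : HasDerivAt (fun σ : ℝ => σ / 2) ((1:ℝ)/2) τ := by
        simpa using (hasDerivAt_id τ).div_const 2
      exact (Real.hasDerivAt_exp (τ / 2)).comp τ hin
    have hfull : HasDerivAt (fun σ => Real.exp (σ / 2) * F (Real.exp (-σ / 2) * ξ) (Real.exp (-σ)) - Real.sqrt 2) _ τ :=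
      (hout.mul hcomp).sub_const (Real.sqrt 2)
    rw [hfull.deriv, hlin, hLz, hLs]
    have has : a * s = c := by
      rw [ha_def, hs_def, hc_def, ← Real.exp_add, show τ / 2 + -τ = -τ / 2 by ring]
    have hac : a * c = 1 := by linarith [hca]
    simp only [← hc_def, ← hs_def, ← ha_def]
    linear_combination (-(ξ * deriv (fun z => F z s) (c * ξ)) / 2) * hac
      - deriv (fun σ => F (c * ξ) σ) s * has
  -- positivity and pointwise identities
  have hP : 0 < F (c * ξ) s := hFpos _ _ hs
  have hP0 : 0 < F 0 s := hFpos _ _ hs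
  have hsqG : ∀ x : ℝ, Real.sqrt 2 + G x τ = a * F (c * x) s := by
    intro x
    rw [hG x τ]
    simp only [← hc_def, ← hs_def, ← ha_def]
    ring
  have hsqGξ : Real.sqrt 2 + G ξ τ = a * F (c * ξ) s := hsqG ξ
  have hsqG0 : Real.sqrt 2 + G 0 τ = a * F 0 s := by
    have h := hsqG 0
    rwa [mul_zero] at h
  have hgξ : deriv (fun x => G x τ) ξ = deriv (fun z => F z s) (c * ξ) := (hgx ξ).deriv
  have hg0 : deriv (fun x => G x τ) 0 = deriv (fun z => F z s) 0 := by
    rw [(hgx 0).deriv, mul_zero]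
  -- first integral identity
  have hI1 : (∫ x in (0:ℝ)..ξ, (deriv (fun x' => G x' τ) x) ^ 2 / (Real.sqrt 2 + G x τ) ^ 2)
      = c * ∫ ζ in (0:ℝ)..(c * ξ), (deriv (fun ζ' => F ζ' s) ζ / F ζ s) ^ 2 := by
    have h1 : ∀ x : ℝ, (deriv (fun x' => G x' τ) x) ^ 2 / (Real.sqrt 2 + G x τ) ^ 2
        = c * c * (deriv (fun ζ' => F ζ' s) (c * x) / F (c * x) s) ^ 2 := by
      intro x
      have hPx : F (c * x) s ≠ 0 := (hFpos _ _ hs).ne'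
      rw [(hgx x).deriv, hsqG x, ha]
      field_simp
    have h2 : c • (∫ x in (0:ℝ)..ξ, (deriv (fun ζ' => F ζ' s) (c * x) / F (c * x) s) ^ 2)
        = ∫ ζ in (c * 0)..(c * ξ), (deriv (fun ζ' => F ζ' s) ζ / F ζ s) ^ 2 :=
      intervalIntegral.smul_integral_comp_mul_left
        (fun ζ => (deriv (fun ζ' => F ζ' s) ζ / F ζ s) ^ 2) c
    rw [mul_zero] at h2
    simp only [h1]
    rw [intervalIntegral.integral_const_mul, ← h2, smul_eq_mul]
    ring
  have hI2 : (∫ x in (0:ℝ)..ξ, ER x τ) = c * ∫ ζ in (0:ℝ)..(c * ξ), Erad ζ s := by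
    have h1 : ∀ x : ℝ, ER x τ = s * Erad (c * x) s := by
      intro x
      rw [hER x τ]
    have h2 : c • (∫ x in (0:ℝ)..ξ, Erad (c * x) s)
        = ∫ ζ in (c * 0)..(c * ξ), Erad ζ s :=
      intervalIntegral.smul_integral_comp_mul_left (fun ζ => Erad ζ s) c
    rw [mul_zero] at h2
    simp only [h1]
    rw [intervalIntegral.integral_const_mul, ← h2, smul_eq_mul]
    linear_combination (-∫ x in (0:ℝ)..ξ, Erad (c * x) s) * hcs
  have hEO' : EO ξ τ = Eorb (c * ξ) s := by
    rw [hEO ξ τ]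
  -- assemble
  have KEY := heq (c * ξ) s hs
  have hFs : deriv (fun σ => F (c * ξ) σ) s
      = -(deriv (deriv (fun ζ => F ζ s)) (c * ξ)
          - (F (c * ξ) s)⁻¹ * (1 + (deriv (fun ζ => F ζ s) (c * ξ)) ^ 2)
          + 2 * deriv (fun ζ => F ζ s) (c * ξ) *
              (deriv (fun ζ => F ζ s) 0 / F 0 s
                - ∫ ζ in (0:ℝ)..(c * ξ), (deriv (fun ζ' => F ζ' s) ζ / F ζ s) ^ 2)
          - (F (c * ξ) s)⁻¹ * Eorb (c * ξ) s
          + deriv (fun ζ => F ζ s) (c * ξ) * ∫ ζ in (0:ℝ)..(c * ξ), Erad ζ s) := by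
    linarith [KEY]
  rw [hEτ, hgxx, hgξ, hg0, hsqGξ, hsqG0, hI1, hI2, hEO', hFs, ha]
  have hPne : F (c * ξ) s ≠ 0 := hP.ne'
  have hP0ne : F 0 s ≠ 0 := hP0.ne'
  have hcne : c ≠ 0 := hc.ne'
  field_simp
  ring
end

section
/- Let α ∈ (1/16, 1), Λ > 0, and let r : [1, ∞) → (0, ∞) satisfy 2s ≤ r(s)² ≤ 2s·(1 + Λ·s^{−α}) for all s ≥ 1. Then there exist K ≥ 1 and θ ∈ (0, 1) such that for every a ≥ K, every γ ∈ [1, 2] with 1/γ ≥ 1 − α, and every s ≥ K²·a^{2/(γα)}: 1 − θ ≤ r(s)/√(2s + K·a^{2/(γα)}) ≤ 1 + (1/100)·a⁻². -/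
set_option maxHeartbeats 1000000 in
/-- The Claim in the proof of Proposition 4.2: bounds on r_max at the shifted scale
2s + K·a^{2/(γα)}. -/
theorem rmax_shifted_scale_bounds
    (α Λ : ℝ) (hα : α ∈ Set.Ioo (1/16 : ℝ) 1) (hΛ : 0 < Λ)
    (r : ℝ → ℝ) (hrpos : ∀ s, 1 ≤ s → 0 < r s)
    (hlow : ∀ s, 1 ≤ s → 2 * s ≤ (r s) ^ 2)
    (hupp : ∀ s, 1 ≤ s → (r s) ^ 2 ≤ 2 * s * (1 + Λ * s ^ (-α))) :
    ∃ K : ℝ, 1 ≤ K ∧ ∃ θ ∈ Set.Ioo (0:ℝ) 1,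
      ∀ a : ℝ, K ≤ a → ∀ γ ∈ Set.Icc (1:ℝ) 2, 1 - α ≤ 1 / γ →
        ∀ s : ℝ, K ^ 2 * a ^ (2 / (γ * α)) ≤ s →
          1 - θ ≤ r s / Real.sqrt (2 * s + K * a ^ (2 / (γ * α))) ∧
            r s / Real.sqrt (2 * s + K * a ^ (2 / (γ * α))) ≤ 1 + (1/100) * a⁻¹ ^ 2 := by
  obtain ⟨hα0, hα1⟩ := hα
  have hαpos : 0 < α := by linarith
  set K : ℝ := max 1 ((50*Λ)^(16:ℕ)) with hKdef
  have hK1 : 1 ≤ K := le_max_left _ _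
  have hKpos : 0 < K := lt_of_lt_of_le one_pos hK1
  have hKα : 50 * Λ ≤ K ^ α := by
    rcases le_or_gt (50*Λ) 1 with h | h
    · calc 50*Λ ≤ 1 := h
        _ ≤ K ^ α := Real.one_le_rpow hK1 hαpos.le
    · have hK' : (50*Λ)^(16:ℕ) ≤ K := le_max_right _ _
      calc 50*Λ = (50*Λ)^(1:ℝ) := (Real.rpow_one _).symm
        _ ≤ (50*Λ)^((16:ℝ)*α) :=
            Real.rpow_le_rpow_of_exponent_le h.le (by nlinarith)
        _ = ((50*Λ)^(16:ℕ) : ℝ)^α := by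
            rw [← Real.rpow_natCast (50*Λ) 16, ← Real.rpow_mul (by linarith)]
            norm_num
        _ ≤ K ^ α := Real.rpow_le_rpow (by positivity) hK' hαpos.le
  refine ⟨K, hK1, 1/2, ⟨by norm_num, by norm_num⟩, ?_⟩
  intro a ha γ hγ hγα s hs
  obtain ⟨hγ1, hγ2⟩ := hγ
  have hγpos : 0 < γ := by linarith
  have ha1 : 1 ≤ a := le_trans hK1 ha
  have hapos : 0 < a := by linarith
  have hepos : 0 < 2/(γ*α) := by positivity
  have hae1 : 1 ≤ a ^ (2/(γ*α)) := Real.one_le_rpow ha1 hepos.le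
  have haepos : 0 < a ^ (2/(γ*α)) := by linarith
  have hbpos : 0 < K * a ^ (2/(γ*α)) := by positivity
  have hbs : K * a ^ (2/(γ*α)) ≤ s := le_trans (by nlinarith) hs
  have hs1 : 1 ≤ s := le_trans (by nlinarith) hs
  have hspos : 0 < s := by linarith
  have hden : 0 < 2*s + K * a ^ (2/(γ*α)) := by linarith
  have hsqrt : 0 < Real.sqrt (2*s + K * a ^ (2/(γ*α))) := Real.sqrt_pos.mpr hden
  constructor
  · -- lower bound with θ = 1/2
    rw [le_div_iff₀ hsqrt]
    have h1 : Real.sqrt (2*s + K * a ^ (2/(γ*α))) ≤ 2 * r s := by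
      have h2 := Real.sqrt_le_sqrt (show 2*s + K * a ^ (2/(γ*α)) ≤ (2 * r s)^2 by
        nlinarith [hlow s hs1])
      rwa [Real.sqrt_sq (by nlinarith [hrpos s hs1])] at h2
    nlinarith [hsqrt]
  · -- upper bound
    set δ : ℝ := (1/100) * a⁻¹ ^ 2 with hδdef
    have hδ0 : 0 ≤ δ := by positivity
    -- key Young inequality step
    have hxα : (K * a ^ (2/(γ*α))) ^ α = K ^ α * a ^ (2/γ) := by
      rw [Real.mul_rpow hKpos.le haepos.le, ← Real.rpow_mul hapos.le]
      congr 2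
      field_simp
    have hy2 : ((a:ℝ)^(2:ℕ)) ^ ((1:ℝ)-α) = a ^ (2*(1-α)) := by
      rw [← Real.rpow_natCast a 2, ← Real.rpow_mul hapos.le]
      norm_num
    have hyα : (s * (25 * a^2)⁻¹) ^ ((1:ℝ)-α)
        = s ^ ((1:ℝ)-α) * ((25:ℝ) ^ ((1:ℝ)-α) * a ^ (2*(1-α)))⁻¹ := by
      rw [Real.mul_rpow hspos.le (by positivity), Real.inv_rpow (by positivity),
        Real.mul_rpow (by norm_num) (by positivity), hy2]
    have hSpos : 0 < s ^ ((1:ℝ)-α) := Real.rpow_pos_of_pos hspos _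
    have hApos : 0 < a ^ (2/γ) := Real.rpow_pos_of_pos hapos _
    have hBpos : 0 < a ^ (2*(1-α)) := Real.rpow_pos_of_pos hapos _
    have hTpos : 0 < (25:ℝ) ^ ((1:ℝ)-α) := Real.rpow_pos_of_pos (by norm_num) _
    have hT25 : (25:ℝ) ^ ((1:ℝ)-α) ≤ 25 := by
      calc (25:ℝ)^((1:ℝ)-α) ≤ (25:ℝ)^(1:ℝ) :=
            Real.rpow_le_rpow_of_exponent_le (by norm_num) (by linarith)
        _ = 25 := Real.rpow_one _
    have hBA : a ^ (2*(1-α)) ≤ a ^ (2/γ) := by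
      apply Real.rpow_le_rpow_of_exponent_le ha1
      have h2γ : 2/γ = 2*(1/γ) := by ring
      linarith
    have hTB : (25:ℝ) ^ ((1:ℝ)-α) * a ^ (2*(1-α)) ≤ 25 * a ^ (2/γ) :=
      mul_le_mul hT25 hBA hBpos.le (by norm_num)
    have hgm : 2*Λ * s^((1:ℝ)-α)
        ≤ (K * a ^ (2/(γ*α))) ^ α * (s * (25 * a^2)⁻¹) ^ ((1:ℝ)-α) := by
      rw [hxα, hyα]
      set S := s ^ ((1:ℝ)-α) with hS
      set A := a ^ (2/γ) with hA
      set B := a ^ (2*(1-α)) with hB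
      set T := (25:ℝ) ^ ((1:ℝ)-α) with hT
      have hQ : K ^ α * A * (S * (T * B)⁻¹) = K ^ α * A * S / (T * B) := by ring
      rw [hQ, le_div_iff₀ (by positivity)]
      nlinarith [mul_le_mul_of_nonneg_left hTB (by positivity : (0:ℝ) ≤ 2*Λ*S),
        mul_le_mul_of_nonneg_right hKα (by positivity : (0:ℝ) ≤ S * A)]
    have hyoung : (K * a ^ (2/(γ*α))) ^ α * (s * (25 * a^2)⁻¹) ^ ((1:ℝ)-α)
        ≤ α * (K * a ^ (2/(γ*α))) + (1-α) * (s * (25 * a^2)⁻¹) :=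
      Real.geom_mean_le_arith_mean2_weighted hαpos.le (by linarith) (by positivity)
        (by positivity) (by ring)
    have hkey : 2*Λ * s^((1:ℝ)-α) ≤ K * a ^ (2/(γ*α)) + s * (25 * a^2)⁻¹ := by
      have hy0 : 0 ≤ s * (25 * a^2)⁻¹ := by positivity
      nlinarith [hgm, hyoung, hbpos.le]
    -- upper bound on r(s)^2
    have hsub : s ^ ((1:ℝ)-α) = s * s^(-α) := by
      rw [sub_eq_add_neg, Real.rpow_add hspos, Real.rpow_one]
    have hupp' : (r s)^2 ≤ 2*s + 2*Λ * s^((1:ℝ)-α) := by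
      have h := hupp s hs1
      rw [hsub]
      nlinarith [h]
    have hinv : s * (25 * a^2)⁻¹ = 4 * δ * s := by
      rw [hδdef, mul_inv, ← inv_pow]
      ring
    have hfin : (r s)^2 ≤ (1+δ)^2 * (2*s + K * a ^ (2/(γ*α))) := by
      rw [hinv] at hkey
      nlinarith [hupp', hkey, mul_nonneg hδ0 hbpos.le,
        mul_nonneg (mul_nonneg hδ0 hδ0) hden.le]
    rw [div_le_iff₀ hsqrt]
    have hrle : r s ≤ (1 + (1/100) * a⁻¹ ^ 2) * Real.sqrt (2*s + K * a ^ (2/(γ*α))) := by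
      apply le_of_pow_le_pow_left₀ (two_ne_zero) (by positivity)
      rw [mul_pow, Real.sq_sqrt hden.le]
      calc (r s)^2 ≤ (1+δ)^2 * (2*s + K * a ^ (2/(γ*α))) := hfin
        _ = (1 + (1/100) * a⁻¹ ^ 2)^2 * (2*s + K * a ^ (2/(γ*α))) := by rw [hδdef]
    exact hrle
end

section
/- Let τ̄ ∈ ℝ and let Γ : (−∞, τ̄] → [0, ∞) be a nondecreasing bounded function. Suppose there is a function ε : (−∞, τ̄] → [0, ∞) with ε(τ) → 0 as τ → −∞ such that Γ(τ − 1) ≤ (e⁻¹ + ε(τ))·Γ(τ) for all τ ≤ τ̄. Then there exists a constant C > 0 such that Γ(τ) ≤ C·e^{τ/2} for all τ ≤ τ̄. -/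
open Filter

/-- Iteration lemma yielding Γ(τ) = O(e^{τ/2}) as τ → −∞. -/
theorem iteration_decay
    (τb : ℝ) (Γ ε : ℝ → ℝ)
    (hmono : MonotoneOn Γ (Set.Iic τb))
    (hnonneg : ∀ τ ≤ τb, 0 ≤ Γ τ)
    (hbdd : ∃ M : ℝ, ∀ τ ≤ τb, Γ τ ≤ M)
    (hε_nonneg : ∀ τ ≤ τb, 0 ≤ ε τ)
    (hε_lim : Tendsto ε atBot (nhds 0))
    (hrec : ∀ τ ≤ τb, Γ (τ - 1) ≤ ((Real.exp 1)⁻¹ + ε τ) * Γ τ) :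
    ∃ C > (0:ℝ), ∀ τ ≤ τb, Γ τ ≤ C * Real.exp (τ / 2) := by
  obtain ⟨M, hM⟩ := hbdd
  have hM0 : 0 ≤ M := le_trans (hnonneg τb le_rfl) (hM τb le_rfl)
  set q : ℝ := Real.exp (-(1/2)) with hq_def
  have hq_pos : 0 < q := Real.exp_pos _
  have hgap : 0 < q - (Real.exp 1)⁻¹ := by
    have : (Real.exp 1)⁻¹ = Real.exp (-1) := by rw [Real.exp_neg]
    rw [this, sub_pos]
    exact Real.exp_lt_exp.mpr (by norm_num)
  -- find τ₁ with ε small below it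
  have hev : ∀ᶠ τ in atBot, ε τ < q - (Real.exp 1)⁻¹ :=
    hε_lim.eventually (gt_mem_nhds hgap)
  obtain ⟨τ₁, hτ₁⟩ := eventually_atBot.mp hev
  set τ₀ : ℝ := min τ₁ τb with hτ₀_def
  have hτ₀b : τ₀ ≤ τb := min_le_right _ _
  have hstep : ∀ τ ≤ τ₀, Γ (τ - 1) ≤ q * Γ τ := by
    intro τ hτ
    have hτb : τ ≤ τb := le_trans hτ hτ₀b
    have h1 : Γ (τ - 1) ≤ ((Real.exp 1)⁻¹ + ε τ) * Γ τ := hrec τ hτb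
    have h2 : (Real.exp 1)⁻¹ + ε τ ≤ q := by
      have := hτ₁ τ (le_trans hτ (min_le_left _ _))
      linarith
    exact h1.trans (mul_le_mul_of_nonneg_right h2 (hnonneg τ hτb))
  -- iterate
  have hiter : ∀ n : ℕ, Γ (τ₀ - n) ≤ q ^ n * Γ τ₀ := by
    intro n
    induction n with
    | zero => simp
    | succ n ih =>
      have h1 : Γ (τ₀ - (n + 1 : ℕ)) = Γ ((τ₀ - n) - 1) := by
        congr 1; push_cast; ring
      rw [h1]
      have h2 : Γ ((τ₀ - n) - 1) ≤ q * Γ (τ₀ - n) :=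
        hstep _ (by have : (0:ℝ) ≤ (n:ℝ) := Nat.cast_nonneg n; linarith)
      calc Γ ((τ₀ - n) - 1) ≤ q * (q ^ n * Γ τ₀) :=
            h2.trans (mul_le_mul_of_nonneg_left ih hq_pos.le)
        _ = q ^ (n + 1) * Γ τ₀ := by ring
  set C : ℝ := max (max (M * Real.exp ((1 - τ₀) / 2)) (M * Real.exp (-τ₀ / 2))) 1 with hC
  refine ⟨C, lt_of_lt_of_le one_pos (le_max_right _ _), ?_⟩
  intro τ hτ
  by_cases hcase : τ ≤ τ₀
  · -- use iteration with n = ⌊τ₀ - τ⌋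
    set n : ℕ := ⌊τ₀ - τ⌋₊ with hn
    have hnle : (n : ℝ) ≤ τ₀ - τ := Nat.floor_le (by linarith)
    have hnge : τ₀ - τ - 1 ≤ (n : ℝ) := by
      have := Nat.lt_floor_add_one (τ₀ - τ)
      linarith
    have hτle : τ ≤ τ₀ - n := by linarith
    have h1 : Γ τ ≤ Γ (τ₀ - n) := by
      refine hmono (Set.mem_Iic.mpr hτ) (Set.mem_Iic.mpr ?_) hτle
      have : (0:ℝ) ≤ n := Nat.cast_nonneg n
      linarith
    have h2 : Γ (τ₀ - n) ≤ q ^ n * Γ τ₀ := hiter n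
    have hqn : q ^ n = Real.exp (-(n / 2)) := by
      rw [hq_def, ← Real.exp_nat_mul]; ring_nf
    have h3 : q ^ n * Γ τ₀ ≤ Real.exp (-(n / 2)) * M := by
      rw [hqn]
      exact mul_le_mul_of_nonneg_left (hM τ₀ hτ₀b) (Real.exp_pos _).le
    have h4 : Real.exp (-(n / 2)) ≤ Real.exp ((1 - τ₀) / 2) * Real.exp (τ / 2) := by
      rw [← Real.exp_add]
      apply Real.exp_le_exp.mpr
      linarith
    calc Γ τ ≤ Real.exp (-(n / 2)) * M := h1.trans (h2.trans h3)
      _ ≤ (Real.exp ((1 - τ₀) / 2) * Real.exp (τ / 2)) * M :=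
          mul_le_mul_of_nonneg_right h4 hM0
      _ = (M * Real.exp ((1 - τ₀) / 2)) * Real.exp (τ / 2) := by ring
      _ ≤ C * Real.exp (τ / 2) := by
          apply mul_le_mul_of_nonneg_right _ (Real.exp_pos _).le
          exact le_trans (le_max_left _ _) (le_max_left _ _)
  · push_neg at hcase
    have h4 : Real.exp (-τ₀ / 2) * Real.exp (τ / 2) ≥ 1 := by
      rw [← Real.exp_add]
      have : 0 ≤ -τ₀ / 2 + τ / 2 := by linarith
      calc (1:ℝ) = Real.exp 0 := Real.exp_zero.symm
        _ ≤ _ := Real.exp_le_exp.mpr this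
    calc Γ τ ≤ M := hM τ hτ
      _ = M * 1 := (mul_one M).symm
      _ ≤ M * (Real.exp (-τ₀ / 2) * Real.exp (τ / 2)) :=
          mul_le_mul_of_nonneg_left h4 hM0
      _ = (M * Real.exp (-τ₀ / 2)) * Real.exp (τ / 2) := by ring
      _ ≤ C * Real.exp (τ / 2) := by
          apply mul_le_mul_of_nonneg_right _ (Real.exp_pos _).le
          exact le_trans (le_max_right _ _) (le_max_left _ _)
end

section
/- Let τ̄ ∈ ℝ and let Γ : (−∞, τ̄] → (0, ∞) be a nondecreasing function. Suppose there is a function ε : (−∞, τ̄] → [0, 1) with ε(τ) → 0 as τ → −∞ such that Γ(τ − 1) ≥ (1 − ε(τ))·Γ(τ) for all τ ≤ τ̄. Then for every β ∈ (0, 1) there exists a constant c > 0 such that Γ(τ) ≥ c·e^{βτ} for all τ ≤ τ̄. -/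
open Filter

/-- Iteration lemma yielding Γ(τ) ≥ c·e^{βτ} for every β ∈ (0,1). -/
theorem iteration_lower_bound
    (τb : ℝ) (Γ ε : ℝ → ℝ)
    (hpos : ∀ τ ≤ τb, 0 < Γ τ)
    (hmono : MonotoneOn Γ (Set.Iic τb))
    (hε_mem : ∀ τ ≤ τb, ε τ ∈ Set.Ico (0:ℝ) 1)
    (hε_lim : Tendsto ε atBot (nhds 0))
    (hrec : ∀ τ ≤ τb, (1 - ε τ) * Γ τ ≤ Γ (τ - 1)) :
    ∀ β ∈ Set.Ioo (0:ℝ) 1, ∃ c > (0:ℝ), ∀ τ ≤ τb, c * Real.exp (β * τ) ≤ Γ τ := by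
  intro β hβ
  obtain ⟨hβ0, hβ1⟩ := hβ
  set δ : ℝ := 1 - Real.exp (-β) with hδdef
  have hδpos : 0 < δ := by
    have : Real.exp (-β) < 1 := Real.exp_lt_one_iff.mpr (by linarith)
    simp [hδdef]; linarith
  obtain ⟨T0, hT0⟩ := (eventually_atBot).mp (hε_lim.eventually (gt_mem_nhds hδpos))
  set T : ℝ := min T0 τb with hTdef
  have hTτb : T ≤ τb := min_le_right _ _
  have hTT0 : T ≤ T0 := min_le_left _ _
  have hΓT : 0 < Γ T := hpos T hTτb
  -- backward iteration
  have key : ∀ n : ℕ, Real.exp (-β * n) * Γ T ≤ Γ (T - n) := by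
    intro n
    induction n with
    | zero => simp
    | succ n ih =>
      have hTn : T - n ≤ τb := by
        have : (0:ℝ) ≤ n := Nat.cast_nonneg n
        linarith
      have hTnT0 : T - n ≤ T0 := by
        have : (0:ℝ) ≤ n := Nat.cast_nonneg n
        linarith
      have hεlt : ε (T - n) < δ := hT0 _ hTnT0
      have h1 : Real.exp (-β) ≤ 1 - ε (T - n) := by
        simp only [hδdef] at hεlt; linarith
      have h2 : (1 - ε (T - n)) * Γ (T - n) ≤ Γ (T - n - 1) := hrec _ hTn
      have hΓn : 0 < Γ (T - n) := hpos _ hTn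
      have : Real.exp (-β) * Γ (T - n) ≤ Γ (T - n - 1) :=
        le_trans (mul_le_mul_of_nonneg_right h1 hΓn.le) h2
      have heq : T - ((n : ℝ) + 1) = T - n - 1 := by ring
      have hexp : Real.exp (-β * (n + 1)) = Real.exp (-β) * Real.exp (-β * n) := by
        rw [← Real.exp_add]; ring_nf
      push_cast
      rw [heq, hexp]
      calc Real.exp (-β) * Real.exp (-β * n) * Γ T
          = Real.exp (-β) * (Real.exp (-β * n) * Γ T) := by ring
        _ ≤ Real.exp (-β) * Γ (T - n) := by
            exact mul_le_mul_of_nonneg_left ih (Real.exp_pos _).le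
        _ ≤ Γ (T - n - 1) := this
  refine ⟨min (Γ T * Real.exp (-β * (T + 1))) (Γ T * Real.exp (-β * τb)), ?_, ?_⟩
  · exact lt_min (mul_pos hΓT (Real.exp_pos _)) (mul_pos hΓT (Real.exp_pos _))
  intro τ hτ
  by_cases hcase : T ≤ τ
  · -- τ ∈ [T, τb]
    have hΓ : Γ T ≤ Γ τ := hmono hTτb hτ hcase
    calc min (Γ T * Real.exp (-β * (T + 1))) (Γ T * Real.exp (-β * τb)) * Real.exp (β * τ)
        ≤ Γ T * Real.exp (-β * τb) * Real.exp (β * τ) := by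
          exact mul_le_mul_of_nonneg_right (min_le_right _ _) (Real.exp_pos _).le
      _ = Γ T * Real.exp (β * (τ - τb)) := by rw [mul_assoc, ← Real.exp_add]; ring_nf
      _ ≤ Γ T * 1 := by
          refine mul_le_mul_of_nonneg_left ?_ hΓT.le
          exact Real.exp_le_one_iff.mpr (by nlinarith)
      _ = Γ T := mul_one _
      _ ≤ Γ τ := hΓ
  · push_neg at hcase
    set n : ℕ := ⌈T - τ⌉₊ with hn
    have hpos' : 0 ≤ T - τ := by linarith
    have hge : T - τ ≤ n := Nat.le_ceil _
    have hlt : (n : ℝ) < T - τ + 1 := by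
      have := Nat.ceil_lt_add_one hpos'
      exact_mod_cast this
    have hTnτ : T - n ≤ τ := by linarith
    have hτb' : T - n ≤ τb := by linarith
    have hΓ1 : Γ (T - n) ≤ Γ τ := hmono hτb' hτ hTnτ
    have hΓ2 : Real.exp (-β * n) * Γ T ≤ Γ (T - n) := key n
    have hexp : Real.exp (-β * (T - τ + 1)) ≤ Real.exp (-β * n) :=
      Real.exp_le_exp.mpr (by nlinarith)
    calc min (Γ T * Real.exp (-β * (T + 1))) (Γ T * Real.exp (-β * τb)) * Real.exp (β * τ)
        ≤ Γ T * Real.exp (-β * (T + 1)) * Real.exp (β * τ) := by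
          exact mul_le_mul_of_nonneg_right (min_le_left _ _) (Real.exp_pos _).le
      _ = Real.exp (-β * (T - τ + 1)) * Γ T := by rw [mul_assoc, ← Real.exp_add]; ring_nf
      _ ≤ Real.exp (-β * n) * Γ T := mul_le_mul_of_nonneg_right hexp hΓT.le
      _ ≤ Γ (T - n) := hΓ2
      _ ≤ Γ τ := hΓ1
end

section
/- Let τ̄ ≤ −1 and let α : (−∞, τ̄] → ℝ be continuously differentiable with α(τ) → 0 as τ → −∞. Define A(τ) := sup_{σ ≤ τ} |α(σ)| and assume A(τ) > 0 for all τ ≤ τ̄. Suppose there is a function ε : (−∞, τ̄] → [0, ∞) with ε(τ) → 0 as τ → −∞ such that |α'(τ) + 2·α(τ)²| ≤ ε(τ)·A(τ)² for all τ ≤ τ̄. Then lim_{τ → −∞} τ·α(τ) = 1/2; equivalently, α(τ) = 1/((2 + o(1))·τ) as τ → −∞. -/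
/-!
Far enough in the past `ε < 2`, and there the running maximum `A τ` is attained at `τ` itself:
at an earlier maximiser `σ` of `|α|` we would have `α' σ = 0`, and the ODE would give
`2 α(σ)² ≤ ε(σ) α(σ)² < 2 α(σ)²`. Hence `|α' + 2α²| ≤ ε α²`, i.e. `(1/α)' = -α'/α² → 2`, and by the
mean value theorem `(1/α)(τ) / τ → 2`.
-/

open Filter Set Topology Asymptotics

theorem isLittleO_id_atBot_of_hasDerivAt_tendsto_zero {E : Type*} [NormedAddCommGroup E]
    [NormedSpace ℝ E] {g g' : ℝ → E}
    (hg : ∀ᶠ x in atBot, HasDerivAt g (g' x) x) (hg' : Tendsto g' atBot (𝓝 0)) :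
    g =o[atBot] id := by
  refine isLittleO_iff.2 fun c hc => ?_
  obtain ⟨T, hT⟩ := eventually_atBot.1
    (hg.and (hg'.eventually (Metric.closedBall_mem_nhds 0 (half_pos hc))))
  have hlip : ∀ x ≤ T, ‖g x - g T‖ ≤ c / 2 * ‖x - T‖ := fun x hx =>
    (convex_Iic T).norm_image_sub_le_of_norm_hasDerivWithin_le
      (fun y hy => (hT y hy).1.hasDerivWithinAt)
      (fun y hy => by simpa using (hT y hy).2) self_mem_Iic hx
  filter_upwards [eventually_le_atBot T,
    (isLittleO_const_id_atBot (‖g T‖ + c / 2 * ‖T‖)).bound (half_pos hc)] with x hxT hK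
  rw [Real.norm_of_nonneg (by positivity), id] at hK
  calc ‖g x‖ ≤ ‖g x - g T‖ + ‖g T‖ := norm_le_norm_sub_add _ _
    _ ≤ c / 2 * (‖x‖ + ‖T‖) + ‖g T‖ := by
      gcongr
      exact (hlip x hxT).trans (by gcongr; exact norm_sub_le _ _)
    _ ≤ c * ‖id x‖ := by rw [id]; linarith

theorem tendsto_div_atBot_of_hasDerivAt_tendsto {g g' : ℝ → ℝ} {l : ℝ}
    (hg : ∀ᶠ x in atBot, HasDerivAt g (g' x) x) (hg' : Tendsto g' atBot (𝓝 l)) :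
    Tendsto (fun x => g x / x) atBot (𝓝 l) := by
  have hlo : (fun x => g x - l * x) =o[atBot] id :=
    isLittleO_id_atBot_of_hasDerivAt_tendsto_zero (g' := fun x => g' x - l)
      (hg.mono fun x hx => by
        have := hx.sub ((hasDerivAt_id' x).const_mul l)
        rwa [mul_one] at this)
      (by simpa using hg'.sub_const l)
  have := hlo.tendsto_div_nhds_zero.add_const l
  rw [zero_add] at this
  refine this.congr' ?_
  filter_upwards [eventually_lt_atBot 0] with x hx
  rw [id, sub_div, mul_div_assoc, div_self hx.ne, mul_one, sub_add_cancel]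

theorem exists_isMaxOn_Iic_of_tendsto_atBot {f : ℝ → ℝ} {b : ℝ} (hf : ContinuousOn f (Iic b))
    (hlim : Tendsto f atBot (𝓝 0)) (hnonneg : ∀ x, 0 ≤ f x) :
    ∃ c ∈ Iic b, IsMaxOn f (Iic b) c := by
  by_cases hpos : ∃ x₀ ∈ Iic b, 0 < f x₀
  · obtain ⟨x₀, hx₀, hpos⟩ := hpos
    obtain ⟨T, hT⟩ := eventually_atBot.1 (hlim.eventually (ge_mem_nhds hpos))
    refine hf.exists_isMaxOn' isClosed_Iic hx₀ (mem_of_superset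
      (inter_mem_inf (isCompact_Icc (a := T) (b := b)).compl_mem_cocompact (mem_principal_self _))
      fun x ⟨hxK, hxb⟩ => hT x ?_)
    by_contra! h
    exact hxK ⟨h.le, hxb⟩
  · push Not at hpos
    exact ⟨b, self_mem_Iic, fun x hx => (hpos x hx).trans (hnonneg b)⟩

theorem sSup_eq_of_isMaxOn_Iic {f : ℝ → ℝ} {τ c : ℝ} (hc : c ≤ τ) (hmax : IsMaxOn f (Iic τ) c) :
    sSup {y : ℝ | ∃ σ ≤ τ, y = f σ} = f c :=
  IsGreatest.csSup_eq ⟨⟨c, hc, rfl⟩, by rintro _ ⟨σ, hσ, rfl⟩; exact hmax hσ⟩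

theorem deriv_eq_zero_of_isMaxOn_abs_Iic {α : ℝ → ℝ} {τ c : ℝ} (hα : DifferentiableAt ℝ α c)
    (hne : α c ≠ 0) (hc : c < τ) (hmax : IsMaxOn (fun s => |α s|) (Iic τ) c) :
    deriv α c = 0 := by
  have hsq : IsLocalMax (fun s => α s ^ 2) c :=
    IsMaxOn.isLocalMax (isMaxOn_iff.2 fun s hs => sq_le_sq.2 (isMaxOn_iff.1 hmax s hs))
      (Iic_mem_nhds hc)
  simpa [hne] using hsq.hasDerivAt_eq_zero (hα.hasDerivAt.pow 2)

theorem abs_neg_div_sq_sub_two_le {a d e : ℝ} (ha : a ≠ 0) (h : |d + 2 * a ^ 2| ≤ e * a ^ 2) :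
    |-d / a ^ 2 - 2| ≤ e := by
  have ha2 : 0 < a ^ 2 := by positivity
  rwa [show -d / a ^ 2 - 2 = -(d + 2 * a ^ 2) / a ^ 2 by field_simp; ring, abs_div, abs_neg,
    abs_of_pos ha2, div_le_iff₀ ha2]

theorem runningSup_eq_abs_of_ode {α A ε : ℝ → ℝ} {b : ℝ} (hdiff : ∀ τ ≤ b, DifferentiableAt ℝ α τ)
    (hα_lim : Tendsto α atBot (𝓝 0)) (hA : ∀ τ ≤ b, A τ = sSup {y : ℝ | ∃ σ ≤ τ, y = |α σ|})
    (hApos : ∀ τ ≤ b, 0 < A τ) (hε : ∀ τ ≤ b, ε τ < 2)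
    (hmain : ∀ τ ≤ b, |deriv α τ + 2 * α τ ^ 2| ≤ ε τ * A τ ^ 2) {τ : ℝ} (hτ : τ ≤ b) :
    A τ = |α τ| := by
  have hcont : ContinuousOn (fun s => |α s|) (Iic τ) := fun s hs =>
    (hdiff s (le_trans hs hτ)).continuousAt.abs.continuousWithinAt
  obtain ⟨c, hcτ : c ≤ τ, hmax⟩ :=
    exists_isMaxOn_Iic_of_tendsto_atBot hcont (by simpa using hα_lim.abs) fun _ => abs_nonneg _
  have hAτ : A τ = |α c| := (hA τ hτ).trans (sSup_eq_of_isMaxOn_Iic hcτ hmax)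
  rcases eq_or_lt_of_le hcτ with rfl | hlt
  · exact hAτ
  have hcb : c ≤ b := hcτ.trans hτ
  have hne : α c ≠ 0 := fun h => by simpa [h, hAτ] using hApos τ hτ
  have hAc : A c = |α c| := (hA c hcb).trans
    (sSup_eq_of_isMaxOn_Iic le_rfl (hmax.on_subset (Iic_subset_Iic.2 hcτ)))
  have hbound := hmain c hcb
  rw [deriv_eq_zero_of_isMaxOn_abs_Iic (hdiff c hcb) hne hlt hmax, hAc, sq_abs, zero_add,
    abs_of_nonneg (by positivity)] at hbound
  have hsq_pos : 0 < α c ^ 2 := by positivity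
  nlinarith [hε c hcb]

theorem neutral_mode_ode_asymptotics_general
    (τb : ℝ)
    (α A ε : ℝ → ℝ)
    (hdiff : ∀ τ ≤ τb, DifferentiableAt ℝ α τ)
    (hα_lim : Tendsto α atBot (nhds 0))
    (hA : ∀ τ ≤ τb, A τ = sSup {y : ℝ | ∃ σ ≤ τ, y = |α σ|})
    (hApos : ∀ τ ≤ τb, 0 < A τ)
    (hε_lim : Tendsto ε atBot (nhds 0))
    (hmain : ∀ τ ≤ τb, |deriv α τ + 2 * (α τ) ^ 2| ≤ ε τ * (A τ) ^ 2) :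
    Tendsto (fun τ => τ * α τ) atBot (nhds (1/2)) := by
  obtain ⟨T, hT⟩ := eventually_atBot.1 (hε_lim.eventually (gt_mem_nhds two_pos))
  have hb : min T τb ≤ τb := min_le_right _ _
  have hAα : ∀ τ ≤ min T τb, A τ = |α τ| := fun τ hτ =>
    runningSup_eq_abs_of_ode (fun s hs => hdiff s (hs.trans hb)) hα_lim
      (fun s hs => hA s (hs.trans hb)) (fun s hs => hApos s (hs.trans hb))
      (fun s hs => hT s (hs.trans (min_le_left _ _))) (fun s hs => hmain s (hs.trans hb)) hτ
  have hne : ∀ τ ≤ min T τb, α τ ≠ 0 := fun τ hτ h => by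
    simpa [hAα τ hτ, h] using hApos τ (hτ.trans hb)
  have hinv_deriv : Tendsto (fun τ => -deriv α τ / α τ ^ 2) atBot (𝓝 2) := by
    rw [tendsto_iff_norm_sub_tendsto_zero]
    refine squeeze_zero' (Eventually.of_forall fun _ => norm_nonneg _)
      (eventually_atBot.2 ⟨min T τb, fun τ hτ => ?_⟩) hε_lim
    have := hmain τ (hτ.trans hb)
    rw [hAα τ hτ, sq_abs] at this
    exact abs_neg_div_sq_sub_two_le (hne τ hτ) this
  have hinv : Tendsto (fun τ => (α τ)⁻¹ / τ) atBot (𝓝 2) :=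
    tendsto_div_atBot_of_hasDerivAt_tendsto
      (eventually_atBot.2 ⟨min T τb, fun τ hτ =>
        (hdiff τ (hτ.trans hb)).hasDerivAt.inv (hne τ hτ)⟩) hinv_deriv
  simpa [div_eq_mul_inv, mul_comm] using hinv.inv₀ two_ne_zero

/-- The ODE asymptotics of Section 5: α'(τ) = −2α(τ)² + o(A(τ)²) implies
α(τ) = 1/((2+o(1))τ), i.e. τ·α(τ) → 1/2 as τ → −∞. -/
theorem neutral_mode_ode_asymptotics
    (τb : ℝ) (hτb : τb ≤ -1)
    (α A ε : ℝ → ℝ)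
    (hdiff : ∀ τ ≤ τb, DifferentiableAt ℝ α τ)
    (hderiv_cont : ContinuousOn (deriv α) (Set.Iic τb))
    (hα_lim : Tendsto α atBot (nhds 0))
    (hA : ∀ τ ≤ τb, A τ = sSup {y : ℝ | ∃ σ ≤ τ, y = |α σ|})
    (hApos : ∀ τ ≤ τb, 0 < A τ)
    (hε_nonneg : ∀ τ ≤ τb, 0 ≤ ε τ)
    (hε_lim : Tendsto ε atBot (nhds 0))
    (hmain : ∀ τ ≤ τb, |deriv α τ + 2 * (α τ) ^ 2| ≤ ε τ * (A τ) ^ 2) :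
    Tendsto (fun τ => τ * α τ) atBot (nhds (1/2)) :=
  neutral_mode_ode_asymptotics_general τb α A ε hdiff hα_lim hA hApos hε_lim hmain
end

section
/- Let τ̄ ≤ −1 and let a : (−∞, τ̄] → ℝ be continuously differentiable. Suppose there exist constants C ≥ 0, ε ∈ (0, 1) and a function η : (−∞, τ̄] → [0, ∞) with η(τ) → 0 as τ → −∞ such that |a'(τ) − a(τ) + (1/√2)·e^τ| ≤ C·e^{ετ}·|a(τ)| + η(τ)·e^τ for all τ ≤ τ̄. Then lim_{τ → −∞} a(τ)/(τ·e^τ) = −1/√2; equivalently, a(τ) = −(1/√2)·τ·e^τ + o(|τ|·e^τ) as τ → −∞. -/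
/-!
With `b τ = e^{-τ} a τ` the hypothesis reads `|b' + 1/√2| ≤ C e^{ετ} |b| + η`. Run backwards in
time, Grönwall's inequality with rate `ε/2` shows that `b` grows at most like `e^{-ετ/2}`, so the
term `C e^{ετ} |b|` still tends to `0`. Hence `b' → -1/√2`, and the mean value inequality turns
this into `b τ / τ → -1/√2`, i.e. `a τ / (τ e^τ) → -1/√2`.
-/

open Filter Topology Asymptotics Set Real

section

variable {E : Type*} [NormedAddCommGroup E] [NormedSpace ℝ E]

theorem isLittleO_id_atBot_of_tendsto_deriv {f f' : ℝ → E}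
    (hf : ∀ᶠ x in atBot, HasDerivAt f (f' x) x) (hf' : Tendsto f' atBot (𝓝 0)) :
    f =o[atBot] id := by
  refine IsLittleO.of_bound fun c hc => ?_
  obtain ⟨T, hT⟩ := eventually_atBot.mp
    (hf.and (hf'.eventually (Metric.closedBall_mem_nhds 0 (half_pos hc))))
  have hlip : ∀ x ≤ T, ‖f x - f T‖ ≤ c / 2 * ‖x - T‖ := fun x hx =>
    (convex_Iic T).norm_image_sub_le_of_norm_hasDerivWithin_le
      (fun y hy => (hT y hy).1.hasDerivWithinAt)
      (fun y hy => mem_closedBall_zero_iff.mp (hT y hy).2) self_mem_Iic hx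
  filter_upwards [(isLittleO_const_id_atBot (‖f T‖ + c / 2 * ‖T‖)).bound (half_pos hc),
    eventually_le_atBot T] with x hconst hx
  rw [norm_of_nonneg (by positivity)] at hconst
  calc ‖f x‖ ≤ ‖f x - f T‖ + ‖f T‖ := norm_le_norm_sub_add _ _
    _ ≤ c / 2 * (‖x‖ + ‖T‖) + ‖f T‖ := by
        gcongr
        exact (hlip x hx).trans (by gcongr; exact norm_sub_le _ _)
    _ ≤ c * ‖id x‖ := by simp only [id] at hconst ⊢; linarith

theorem tendsto_inv_smul_atBot_of_tendsto_deriv {f f' : ℝ → E} {L : E}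
    (hf : ∀ᶠ x in atBot, HasDerivAt f (f' x) x) (hf' : Tendsto f' atBot (𝓝 L)) :
    Tendsto (fun x => x⁻¹ • f x) atBot (𝓝 L) := by
  have hg : ∀ᶠ x in atBot, HasDerivAt (fun x => f x - x • L) (f' x - L) x :=
    hf.mono fun x hx => by
      have := hx.sub ((hasDerivAt_id' x).smul_const L)
      rwa [one_smul] at this
  have := (isLittleO_id_atBot_of_tendsto_deriv hg
    (tendsto_sub_nhds_zero_iff.mpr hf')).tendsto_inv_smul_nhds_zero
  refine tendsto_sub_nhds_zero_iff.mp (this.congr' ?_)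
  filter_upwards [eventually_lt_atBot 0] with x hx
  simp [smul_sub, smul_smul, inv_mul_cancel₀ hx.ne]

theorem norm_le_gronwallBound_sub_of_norm_deriv_le_on_Iic {b b' : ℝ → E} {K c T x : ℝ}
    (hb : ∀ y ≤ T, HasDerivAt b (b' y) y) (bound : ∀ y ≤ T, ‖b' y‖ ≤ K * ‖b y‖ + c)
    (hx : x ≤ T) : ‖b x‖ ≤ gronwallBound ‖b T‖ K c (T - x) := by
  have hrev : ∀ t ∈ Icc 0 (T - x), HasDerivAt (fun t => b (T - t)) (-b' (T - t)) t :=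
    fun t ht => (hb (T - t) (by linarith [ht.1])).comp_const_sub T t
  simpa using norm_le_gronwallBound_of_norm_deriv_right_le
    (fun t ht => (hrev t ht).continuousAt.continuousWithinAt)
    (fun t ht => (hrev t (Ico_subset_Icc_self ht)).hasDerivWithinAt)
    (by simp) (fun t ht => by simpa using bound (T - t) (by linarith [ht.1]))
    (T - x) ⟨sub_nonneg.mpr hx, le_rfl⟩

theorem isBigO_exp_neg_mul_atBot_of_norm_deriv_le {b b' : ℝ → E} {K c : ℝ} (hK : 0 < K)
    (h : ∀ᶠ x in atBot, HasDerivAt b (b' x) x ∧ ‖b' x‖ ≤ K * ‖b x‖ + c) :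
    b =O[atBot] fun x => exp (-(K * x)) := by
  obtain ⟨T, hT⟩ := eventually_atBot.mp h
  refine IsBigO.of_bound ((‖b T‖ + |c| / K) * exp (K * T)) ?_
  filter_upwards [eventually_le_atBot T] with x hx
  have hgrowth : 1 ≤ exp (K * (T - x)) := one_le_exp (by nlinarith)
  have hc : c / K * (exp (K * (T - x)) - 1) ≤ |c| / K * exp (K * (T - x)) := by
    calc c / K * (exp (K * (T - x)) - 1) ≤ |c| / K * (exp (K * (T - x)) - 1) := by
          gcongr; exact le_abs_self c
      _ ≤ |c| / K * exp (K * (T - x)) := by gcongr; linarith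
  calc ‖b x‖ ≤ gronwallBound ‖b T‖ K c (T - x) :=
        norm_le_gronwallBound_sub_of_norm_deriv_le_on_Iic (fun y hy => (hT y hy).1)
          (fun y hy => (hT y hy).2) hx
    _ ≤ (‖b T‖ + |c| / K) * exp (K * (T - x)) := by
        rw [gronwallBound_of_K_ne_0 hK.ne']; linarith
    _ = (‖b T‖ + |c| / K) * exp (K * T) * ‖exp (-(K * x))‖ := by
        rw [norm_of_nonneg (exp_nonneg _), mul_assoc, ← exp_add]; ring_nf

theorem tendsto_inv_smul_atBot_of_norm_deriv_add_le {b b' : ℝ → E} {η : ℝ → ℝ} {v : E}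
    {C ε : ℝ} (hε : 0 < ε) (hb : ∀ᶠ x in atBot, HasDerivAt b (b' x) x)
    (hη : Tendsto η atBot (𝓝 0))
    (h : ∀ᶠ x in atBot, ‖b' x + v‖ ≤ C * exp (ε * x) * ‖b x‖ + η x) :
    Tendsto (fun x => x⁻¹ • b x) atBot (𝓝 (-v)) := by
  have hexp : ∀ {κ : ℝ}, 0 < κ → Tendsto (fun x => exp (κ * x)) atBot (𝓝 0) := fun hκ =>
    tendsto_exp_atBot.comp (tendsto_id.const_mul_atBot hκ)
  have hCexp : Tendsto (fun x => C * exp (ε * x)) atBot (𝓝 0) := by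
    simpa using (hexp hε).const_mul C
  have hgrowth : b =O[atBot] fun x => exp (-(ε / 2 * x)) := by
    refine isBigO_exp_neg_mul_atBot_of_norm_deriv_le (b' := b') (c := ‖v‖ + 1) (half_pos hε) ?_
    filter_upwards [hb, h, hCexp.eventually (eventually_le_nhds (half_pos hε)),
      hη.eventually (eventually_le_nhds one_pos)] with x hbx hx hCx hηx
    refine ⟨hbx, ?_⟩
    calc ‖b' x‖ ≤ ‖b' x + v‖ + ‖v‖ := norm_le_add_norm_add _ _
      _ ≤ C * exp (ε * x) * ‖b x‖ + η x + ‖v‖ := by linarith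
      _ ≤ ε / 2 * ‖b x‖ + (‖v‖ + 1) := by
          nlinarith [mul_le_mul_of_nonneg_right hCx (norm_nonneg (b x))]
  have hdecay : Tendsto (fun x => C * exp (ε * x) * ‖b x‖) atBot (𝓝 0) := by
    have hO : (fun x => C * exp (ε * x) * ‖b x‖) =O[atBot] fun x => exp (ε / 2 * x) := by
      refine ((isBigO_refl (fun x => C * exp (ε * x)) atBot).mul hgrowth.norm_left).trans ?_
      refine (isBigO_const_mul_self C _ _).congr_left fun x => ?_
      rw [mul_assoc, ← exp_add]; ring_nf
    exact hO.trans_tendsto (hexp (half_pos hε))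
  have hderiv : Tendsto b' atBot (𝓝 (-v)) := by
    refine tendsto_sub_nhds_zero_iff.mp ?_
    simp only [sub_neg_eq_add]
    exact squeeze_zero_norm' h (by simpa using hdecay.add hη)
  exact tendsto_inv_smul_atBot_of_tendsto_deriv hb hderiv

end

theorem hasDerivAt_exp_neg_mul {a : ℝ → ℝ} {a' x : ℝ} (ha : HasDerivAt a a' x) :
    HasDerivAt (fun x => exp (-x) * a x) (exp (-x) * (a' - a x)) x :=
  ((hasDerivAt_neg x).exp.mul ha).congr_deriv (by ring)

theorem abs_exp_neg_mul_sub_add_le {a a' c κ C δ η : ℝ}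
    (h : |a' - a + c * exp κ| ≤ C * exp δ * |a| + η * exp κ) :
    |exp (-κ) * (a' - a) + c| ≤ C * exp δ * |exp (-κ) * a| + η := by
  have hinv : exp (-κ) * exp κ = 1 := by rw [← exp_add, neg_add_cancel, exp_zero]
  calc |exp (-κ) * (a' - a) + c| = exp (-κ) * |a' - a + c * exp κ| := by
        rw [← abs_of_pos (exp_pos (-κ)), ← abs_mul, abs_of_pos (exp_pos (-κ))]
        congr 1
        linear_combination -c * hinv
    _ ≤ exp (-κ) * (C * exp δ * |a| + η * exp κ) := by gcongr
    _ = C * exp δ * |exp (-κ) * a| + η := by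
        rw [abs_mul, abs_of_pos (exp_pos (-κ))]
        linear_combination η * hinv

theorem positive_mode_ode_asymptotics_general
    (τb : ℝ)
    (a η : ℝ → ℝ) (C ε : ℝ)
    (hε : ε ∈ Set.Ioo (0:ℝ) 1)
    (hdiff : ∀ τ ≤ τb, DifferentiableAt ℝ a τ)
    (hη_lim : Tendsto η atBot (nhds 0))
    (hmain : ∀ τ ≤ τb,
      |deriv a τ - a τ + (1 / Real.sqrt 2) * Real.exp τ|
        ≤ C * Real.exp (ε * τ) * |a τ| + η τ * Real.exp τ) :
    Tendsto (fun τ => a τ / (τ * Real.exp τ)) atBot (nhds (-(1 / Real.sqrt 2))) := by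
  have hb : ∀ᶠ τ in atBot,
      HasDerivAt (fun τ => exp (-τ) * a τ) (exp (-τ) * (deriv a τ - a τ)) τ :=
    eventually_atBot.mpr ⟨τb, fun τ hτ => hasDerivAt_exp_neg_mul (hdiff τ hτ).hasDerivAt⟩
  have hkey : ∀ᶠ τ in atBot, ‖exp (-τ) * (deriv a τ - a τ) + 1 / √2‖
      ≤ C * exp (ε * τ) * ‖exp (-τ) * a τ‖ + η τ :=
    eventually_atBot.mpr ⟨τb, fun τ hτ => abs_exp_neg_mul_sub_add_le (hmain τ hτ)⟩
  refine (tendsto_inv_smul_atBot_of_norm_deriv_add_le hε.1 hb hη_lim hkey).congr fun τ => ?_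
  rw [smul_eq_mul, exp_neg]
  field_simp

/-- The linear ODE asymptotics of Section 6: a'(τ) = a(τ) − (1/√2 + o(1))e^τ + O(e^{ετ})a(τ)
integrates to a(τ) = −(1/√2)·τ·e^τ + o(|τ|e^τ), i.e. a(τ)/(τe^τ) → −1/√2. -/
theorem positive_mode_ode_asymptotics
    (τb : ℝ) (hτb : τb ≤ -1)
    (a η : ℝ → ℝ) (C ε : ℝ)
    (hC : 0 ≤ C) (hε : ε ∈ Set.Ioo (0:ℝ) 1)
    (hdiff : ∀ τ ≤ τb, DifferentiableAt ℝ a τ)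
    (hderiv_cont : ContinuousOn (deriv a) (Set.Iic τb))
    (hη_nonneg : ∀ τ ≤ τb, 0 ≤ η τ)
    (hη_lim : Tendsto η atBot (nhds 0))
    (hmain : ∀ τ ≤ τb,
      |deriv a τ - a τ + (1 / Real.sqrt 2) * Real.exp τ|
        ≤ C * Real.exp (ε * τ) * |a τ| + η τ * Real.exp τ) :
    Tendsto (fun τ => a τ / (τ * Real.exp τ)) atBot (nhds (-(1 / Real.sqrt 2))) :=
  positive_mode_ode_asymptotics_general τb a η C ε hε hdiff hη_lim hmain
end

section
/- Let τ̄ < 0 and C ≥ 0. Let φ : (−∞, τ̄] → ℝ be differentiable with sup_{σ ≤ τ̄} |φ(σ) − 2| < ∞, and let ρ : (−∞, τ̄] → [0, ∞) be nondecreasing. Suppose φ'(τ) ≤ φ(τ) − 2 + C·ρ(τ) for all τ ≤ τ̄. Then for every τ ≤ 2τ̄: φ(τ) ≥ 2 − m(τ/2)·e^{τ/2} − C·ρ(τ/2), where m(σ) := sup_{σ' ≤ σ} |φ(σ') − 2|. -/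
/-!
Taking the largest value `K = Cρ(τ/2)` of the forcing term on `[τ, τ/2]` turns the hypothesis into the
linear inequality `φ' ≤ φ - 2 + K` there, so `(φ - 2 + K)e^{-σ}` is nonincreasing on `[τ, τ/2]`.
Comparing its values at the two endpoints and using `φ(τ/2) - 2 ≥ -m(τ/2)` and `K ≥ 0` gives the bound.
-/

open Real Set

theorem antitoneOn_add_mul_exp_neg_of_deriv_le {f : ℝ → ℝ} {s : Set ℝ} {c : ℝ} (hs : Convex ℝ s)
    (hf : ∀ x ∈ s, DifferentiableAt ℝ f x) (hf' : ∀ x ∈ interior s, deriv f x ≤ f x + c) :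
    AntitoneOn (fun x => (f x + c) * exp (-x)) s := by
  have hderiv : ∀ x ∈ s,
      HasDerivAt (fun x => (f x + c) * exp (-x)) ((deriv f x - (f x + c)) * exp (-x)) x := by
    intro x hx
    exact (((hf x hx).hasDerivAt.add_const c).mul (hasDerivAt_neg x).exp).congr_deriv (by ring)
  refine antitoneOn_of_deriv_nonpos hs
    (fun x hx => (hderiv x hx).continuousAt.continuousWithinAt)
    (fun x hx => (hderiv x (interior_subset hx)).differentiableAt.differentiableWithinAt)
    fun x hx => ?_
  rw [(hderiv x (interior_subset hx)).deriv]
  exact mul_nonpos_of_nonpos_of_nonneg (by linarith [hf' x hx]) (exp_pos _).le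

theorem add_mul_exp_sub_le_of_deriv_le {f : ℝ → ℝ} {a b c : ℝ} (hab : a ≤ b)
    (hf : ∀ x ∈ Icc a b, DifferentiableAt ℝ f x) (hf' : ∀ x ∈ Ioo a b, deriv f x ≤ f x + c) :
    (f b + c) * exp (a - b) ≤ f a + c := by
  have hanti := antitoneOn_add_mul_exp_neg_of_deriv_le (convex_Icc a b) hf
    (by rwa [interior_Icc])
  have hcomp := mul_le_mul_of_nonneg_right
    (hanti (left_mem_Icc.2 hab) (right_mem_Icc.2 hab) hab) (exp_pos a).le
  calc (f b + c) * exp (a - b) = (f b + c) * exp (-b) * exp a := by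
        rw [mul_assoc, ← exp_add, neg_add_eq_sub]
    _ ≤ (f a + c) * exp (-a) * exp a := hcomp
    _ = f a + c := by rw [mul_assoc, ← exp_add, neg_add_cancel, exp_zero, mul_one]

/-- The differential inequality estimate at the core of Lemma 6.2:
φ' ≤ φ − 2 + Cρ implies φ(τ) ≥ 2 − m(τ/2)e^{τ/2} − Cρ(τ/2) for τ ≤ 2τ̄. -/
theorem differential_inequality_lower_bound
    (τb C : ℝ) (hτb : τb < 0) (hC : 0 ≤ C)
    (φ ρ m : ℝ → ℝ)
    (hφdiff : ∀ τ ≤ τb, DifferentiableAt ℝ φ τ)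
    (hφbdd : ∃ M : ℝ, ∀ σ ≤ τb, |φ σ - 2| ≤ M)
    (hρ_nonneg : ∀ τ ≤ τb, 0 ≤ ρ τ)
    (hρ_mono : MonotoneOn ρ (Set.Iic τb))
    (hineq : ∀ τ ≤ τb, deriv φ τ ≤ φ τ - 2 + C * ρ τ)
    (hm : ∀ σ ≤ τb, m σ = sSup {y : ℝ | ∃ σ' ≤ σ, y = |φ σ' - 2|}) :
    ∀ τ ≤ 2 * τb, 2 - m (τ / 2) * Real.exp (τ / 2) - C * ρ (τ / 2) ≤ φ τ := by
  intro τ hτ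
  have hhalf : τ / 2 ≤ τb := by linarith
  have hτ_le_half : τ ≤ τ / 2 := by linarith
  set K := C * ρ (τ / 2)
  have hK : 0 ≤ K := mul_nonneg hC (hρ_nonneg _ hhalf)
  have hcomp := add_mul_exp_sub_le_of_deriv_le (c := K - 2) hτ_le_half
    (fun x hx => hφdiff x (hx.2.trans hhalf)) fun x hx => by
      have hx' : x ≤ τb := hx.2.le.trans hhalf
      have := mul_le_mul_of_nonneg_left (hρ_mono hx' hhalf hx.2.le) hC
      linarith [hineq x hx']
  have hm_ge : |φ (τ / 2) - 2| ≤ m (τ / 2) := by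
    obtain ⟨M, hM⟩ := hφbdd
    rw [hm _ hhalf]
    exact le_csSup ⟨M, by rintro y ⟨σ, hσ, rfl⟩; exact hM σ (hσ.trans hhalf)⟩ ⟨τ / 2, le_rfl, rfl⟩
  rw [show τ - τ / 2 = τ / 2 by ring] at hcomp
  nlinarith [neg_abs_le (φ (τ / 2) - 2), exp_pos (τ / 2)]
end

section
/- Let T ≥ 1, L ≥ 2, ε ∈ (0, 1], and d ≥ L, and let g : [0, d] → ℝ be a concave function with g(x) ≥ −√2 for all x ∈ [0, d], g(0) ≥ (2 − ε)/(4√2·T), and g(L) ≤ (2 − L² + ε)/(4√2·T). Then d ≤ max(2L, 2L·(8T + 2)/(L² − 2)). -/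
/-! Concavity bounds `g` at `L` from below by the chord through `(0, g 0)` and `(d, g d)`:
`(d - L) g(0) + L g(d) ≤ d g(L)`. Inserting `g 0 ≳ 2/(4√2 T)`, `g d ≥ -√2` and
`g L ≲ (2 - L²)/(4√2 T)` and clearing the factor `4√2 T` leaves `d (L² - 2ε) ≤ L (8T + 2 - ε)`,
so `d ≤ L (8T + 2)/(L² - 2)` since `L² > 2` and `0 < ε ≤ 1`. -/

theorem ConcaveOn.sub_mul_add_sub_mul_le_sub_mul {𝕜 : Type*} [Field 𝕜] [LinearOrder 𝕜]
    [IsStrictOrderedRing 𝕜] {s : Set 𝕜} {g : 𝕜 → 𝕜} (hg : ConcaveOn 𝕜 s g) {x y z : 𝕜}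
    (hx : x ∈ s) (hz : z ∈ s) (hxy : x ≤ y) (hyz : y ≤ z) :
    (z - y) * g x + (y - x) * g z ≤ (z - x) * g y := by
  rcases hxy.eq_or_lt with rfl | hxy
  · simp
  rcases hyz.eq_or_lt with rfl | hyz
  · simp
  have := hg.neg.secant_mono_aux1 hx hz hxy hyz
  simp only [Pi.neg_apply, mul_neg] at this
  linarith

/-- The concavity estimate of Corollary 5.11: a concave function bounded below by −√2
with the stated values at 0 and L lives on an interval of length ≤ max(2L, 2L(8T+2)/(L²−2)). -/
theorem concavity_domain_bound
    (T L ε d : ℝ) (hT : 1 ≤ T) (hL : 2 ≤ L) (hε : ε ∈ Set.Ioc (0:ℝ) 1) (hd : L ≤ d)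
    (g : ℝ → ℝ)
    (hconc : ConcaveOn ℝ (Set.Icc 0 d) g)
    (hlow : ∀ x ∈ Set.Icc (0:ℝ) d, -Real.sqrt 2 ≤ g x)
    (h0 : (2 - ε) / (4 * Real.sqrt 2 * T) ≤ g 0)
    (hL' : g L ≤ (2 - L ^ 2 + ε) / (4 * Real.sqrt 2 * T)) :
    d ≤ max (2 * L) (2 * L * (8 * T + 2) / (L ^ 2 - 2)) := by
  obtain ⟨hε0, hε1⟩ := hε
  have hL0 : 0 < L := by linarith
  have hL2 : 0 < L ^ 2 - 2 := by nlinarith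
  have hd0 : 0 ≤ d := hL0.le.trans hd
  have hP : 0 < 4 * √2 * T := by positivity
  have hchord : (d - L) * g 0 + L * g d ≤ d * g L := by
    simpa using hconc.sub_mul_add_sub_mul_le_sub_mul ⟨le_rfl, hd0⟩ ⟨hd0, le_rfl⟩ hL0.le hd
  have hg0 : 2 - ε ≤ g 0 * (4 * √2 * T) := (div_le_iff₀ hP).1 h0
  have hgL : g L * (4 * √2 * T) ≤ 2 - L ^ 2 + ε := (le_div_iff₀ hP).1 hL'
  have hgd : -(8 * T) ≤ g d * (4 * √2 * T) := by
    linear_combination mul_le_mul_of_nonneg_right (hlow d ⟨hd0, le_rfl⟩) hP.le +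
      4 * T * Real.mul_self_sqrt zero_le_two
  have hcleared : d * (L ^ 2 - 2 * ε) ≤ L * (8 * T + 2 - ε) := by
    linarith [mul_le_mul_of_nonneg_right hchord hP.le,
      mul_le_mul_of_nonneg_left hg0 (sub_nonneg.2 hd), mul_le_mul_of_nonneg_left hgL hd0,
      mul_le_mul_of_nonneg_left hgd hL0.le]
  calc d ≤ L * (8 * T + 2) / (L ^ 2 - 2) := by
        rw [le_div_iff₀ hL2]
        linarith [hcleared, mul_le_mul_of_nonneg_left hε1 hd0, mul_pos hL0 hε0]
    _ ≤ 2 * L * (8 * T + 2) / (L ^ 2 - 2) := by gcongr; linarith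
    _ ≤ _ := le_max_right _ _
end
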